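/- arXiv:2512.01835 — 5 statements merged into one kernel-verified Lean document; each statement's English description precedes it below -/
import Mathlib

section
/- In the type A Hecke algebra H_n, the Jucys-Murphy elements θ_i = t^{i-1}·T_{i-1}^{-1}···T_1^{-1}·T_1^{-1}···T_{i-1}^{-1} pairwise commute: θ_i θ_j = θ_j θ_i for all 1 ≤ i, j ≤ n. -/
/-- The Jucys–Murphy element `θ i = t^(i-1) • (Tinv (i-1) ⋯ Tinv 1 * Tinv 1 ⋯ Tinv (i-1))`
of the type A Hecke algebra. -/
noncomputable def jucysMurphy {F A : Type*} [Field F] [Ring A] [Algebra F A]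
    (t : F) (Tinv : ℕ → A) (i : ℕ) : A :=
  t ^ (i - 1) •
    ((((List.range (i - 1)).reverse.map fun k => Tinv (k + 1)).prod) *
      (((List.range (i - 1)).map fun k => Tinv (k + 1)).prod))

namespace JMaux
variable {A : Type*} [Ring A]

def asc (T : ℕ → A) (m : ℕ) : A := ((List.range m).map fun k => T (k+1)).prod
def desc (T : ℕ → A) (m : ℕ) : A := ((List.range m).reverse.map fun k => T (k+1)).prod
def dsc (T : ℕ → A) (i k : ℕ) : A := ((List.range k).map fun j => T (i - j)).prod

lemma asc_zero (T : ℕ → A) : asc T 0 = 1 := rfl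
lemma desc_zero (T : ℕ → A) : desc T 0 = 1 := rfl
lemma asc_succ (T : ℕ → A) (m : ℕ) : asc T (m+1) = asc T m * T (m+1) := by
  simp [asc, List.range_succ]
lemma desc_succ (T : ℕ → A) (m : ℕ) : desc T (m+1) = T (m+1) * desc T m := by
  simp [desc, List.range_succ]
lemma dsc_succ (T : ℕ → A) (i k : ℕ) : dsc T i (k+1) = dsc T i k * T (i-k) := by
  simp [dsc, List.range_succ]
lemma dsc_cons (T : ℕ → A) (i k : ℕ) : dsc T i (k+1) = T i * dsc T (i-1) k := by
  simp only [dsc, List.range_succ_eq_map, List.map_cons, List.map_map, List.prod_cons,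
    Nat.sub_zero]
  have h : ((fun j => T (i - j)) ∘ Nat.succ) = fun j => T (i-1-j) := by
    funext j
    simp only [Function.comp_apply, Nat.succ_eq_add_one]
    congr 1
    omega
  rw [h]
lemma dsc_one (T : ℕ → A) (i : ℕ) : dsc T i 1 = T i := by
  rw [show (1:ℕ) = 0 + 1 by omega, dsc_succ]
  simp [dsc]
lemma dsc_eq_desc (T : ℕ → A) (i : ℕ) : dsc T i i = desc T i := by
  unfold dsc desc
  congr 1
  apply List.ext_getElem
  · simp
  · intro j h1 h2
    simp at h1 h2 ⊢
    congr 1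
    omega

/-- An element commuting with each `T l`, `1 ≤ l ≤ m`, commutes with `asc T m`. -/
lemma commute_asc {T : ℕ → A} {x : A} {m : ℕ}
    (h : ∀ l, 1 ≤ l → l ≤ m → Commute x (T l)) : Commute x (asc T m) := by
  apply Commute.list_prod_right
  intro y hy
  simp only [List.mem_map, List.mem_range] at hy
  obtain ⟨k, hk, rfl⟩ := hy
  exact h (k+1) (by omega) (by omega)

lemma commute_desc {T : ℕ → A} {x : A} {m : ℕ}
    (h : ∀ l, 1 ≤ l → l ≤ m → Commute x (T l)) : Commute x (desc T m) := by
  apply Commute.list_prod_right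
  intro y hy
  simp only [List.mem_map, List.mem_reverse, List.mem_range] at hy
  obtain ⟨k, hk, rfl⟩ := hy
  exact h (k+1) (by omega) (by omega)

lemma commute_dsc {T : ℕ → A} {x : A} {i k : ℕ} (hk : k ≤ i)
    (h : ∀ l, i - k + 1 ≤ l → l ≤ i → Commute x (T l)) : Commute x (dsc T i k) := by
  apply Commute.list_prod_right
  intro y hy
  simp only [List.mem_map, List.mem_range] at hy
  obtain ⟨j, hj, rfl⟩ := hy
  exact h (i - j) (by omega) (by omega)

lemma aux_braid (a s r : A) (hb : s*r*s = r*s*r) (hc : r*a = a*r) :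
    a*s*r*s = r*(a*s*r) := by
  have hb' : s*(r*s) = r*(s*r) := by simpa [mul_assoc] using hb
  simp only [mul_assoc]
  rw [hb', ← mul_assoc a r, ← hc, mul_assoc]

section withrel
variable (n : ℕ) (T : ℕ → A)
  (hbraid : ∀ i, 1 ≤ i → i + 2 ≤ n → T i * T (i + 1) * T i = T (i + 1) * T i * T (i + 1))
  (hcomm : ∀ i j, 1 ≤ i → i + 1 < j → j + 1 ≤ n → T i * T j = T j * T i)

include hcomm in
lemma commute_T_asc {j m : ℕ} (h1 : m + 1 < j) (h2 : j + 1 ≤ n) :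
    Commute (T j) (asc T m) := by
  apply commute_asc
  intro l hl hl'
  have h := hcomm l j hl (by omega) h2
  exact h.symm

include hbraid hcomm in
/-- Shift identity: `(T 1 ⋯ T m) * T k = T (k+1) * (T 1 ⋯ T m)` for `1 ≤ k < m`. -/
lemma shift : ∀ m k, 1 ≤ k → k + 1 ≤ m → m + 1 ≤ n →
    asc T m * T k = T (k+1) * asc T m := by
  intro m
  induction m with
  | zero => intro k h1 h2 h3; omega
  | succ m ih =>
    intro k h1 h2 h3
    rcases Nat.lt_or_ge (k+1) (m+1) with hlt | hge
    · rw [asc_succ, mul_assoc, ← hcomm k (m+1) h1 (by omega) (by omega),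
        ← mul_assoc, ih k h1 (by omega) (by omega), mul_assoc]
    · have hmk : m = k := by omega
      subst hmk
      obtain ⟨k', rfl⟩ : ∃ k', m = k' + 1 := ⟨m - 1, by omega⟩
      rw [asc_succ, asc_succ]
      exact aux_braid (asc T k') (T (k'+1)) (T (k'+1+1))
        (hbraid (k'+1) (by omega) (by omega))
        (commute_T_asc n T hcomm (by omega) (by omega)).eq

include hbraid hcomm in
lemma dshift : ∀ i k, 2 ≤ k → k ≤ i → i + 1 ≤ n →
    dsc T i k * T i = T (i-1) * dsc T i k := by
  intro i k h2 hki hin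
  obtain ⟨k'', rfl⟩ : ∃ k'', k = k'' + 2 := ⟨k - 2, by omega⟩
  obtain ⟨i'', rfl⟩ : ∃ i'', i = i'' + 2 := ⟨i - 2, by omega⟩
  have e1 : i'' + 2 - 1 = i'' + 1 := by omega
  rw [dsc_cons, e1, dsc_cons, show i'' + 1 - 1 = i'' from by omega]
  set R := dsc T i'' k'' with hR
  have hcR : T (i''+2) * R = R * T (i''+2) := by
    refine (commute_dsc (by omega) ?_).eq
    intro l hl1 hl2
    exact (hcomm l (i''+2) (by omega) (by omega) (by omega)).symm
  have hb : T (i''+1) * T (i''+2) * T (i''+1) = T (i''+2) * T (i''+1) * T (i''+2) := by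
    have := hbraid (i''+1) (by omega) (by omega)
    simpa using this
  set s := T (i''+1)
  set r := T (i''+2)
  calc r*(s*R)*r = r*(s*(r*R)) := by rw [hcR]; simp [mul_assoc]
    _ = (r*s*r)*R := by simp [mul_assoc]
    _ = (s*r*s)*R := by rw [← hb]
    _ = s*(r*(s*R)) := by simp [mul_assoc]

include hbraid hcomm in
lemma dsc_asc : ∀ i k, 1 ≤ k → k + 1 ≤ i → i + 1 ≤ n →
    dsc T i k * asc T (i-1) = asc T (i-2) * dsc T i (k+1) := by
  intro i k hk1
  induction k, hk1 using Nat.le_induction with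
  | base =>
    intro hi hin
    obtain ⟨i'', rfl⟩ : ∃ i'', i = i'' + 2 := ⟨i - 2, by omega⟩
    have e1 : i'' + 2 - 1 = i'' + 1 := by omega
    have e2 : i'' + 2 - 2 = i'' := by omega
    rw [e1, e2]
    have hd2 : dsc T (i''+2) 2 = T (i''+2) * T (i''+1) := by
      rw [show (2:ℕ) = 1 + 1 by omega, dsc_succ, dsc_one, e1]
    rw [dsc_one, hd2, asc_succ]
    have hc : Commute (T (i''+2)) (asc T i'') :=
      commute_T_asc n T hcomm (by omega) (by omega)
    rw [← mul_assoc, hc.eq, mul_assoc]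
  | succ k hk ih =>
    intro hki hin
    have e3 : i - k - 1 + 1 = i - k := by omega
    have e4 : i - (k+1) = i - k - 1 := by omega
    have hs : T (i-k) * asc T (i-1) = asc T (i-1) * T (i-k-1) := by
      rw [← e3]
      exact (shift n T hbraid hcomm (i-1) (i-k-1) (by omega) (by omega) (by omega)).symm
    rw [dsc_succ, mul_assoc, hs, ← mul_assoc, ih (by omega) (by omega), mul_assoc, ← e4,
      ← dsc_succ]

include hbraid hcomm in
lemma asc_pow : ∀ i k, 1 ≤ k → k ≤ i → i + 1 ≤ n →
    asc T i ^ k = asc T (i-1) ^ k * dsc T i k := by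
  intro i k hk1
  induction k, hk1 using Nat.le_induction with
  | base =>
    intro hi hin
    obtain ⟨i', rfl⟩ : ∃ i', i = i' + 1 := ⟨i - 1, by omega⟩
    rw [pow_one, pow_one, dsc_one, show i' + 1 - 1 = i' by omega, asc_succ]
  | succ k hk ih =>
    intro hki hin
    obtain ⟨i'', rfl⟩ : ∃ i'', i = i'' + 2 := ⟨i - 2, by omega⟩
    have e1 : i'' + 2 - 1 = i'' + 1 := by omega
    have e2 : i'' + 2 - 2 = i'' := by omega
    have hA : asc T (i''+2) = asc T (i''+1) * T (i''+2) := by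
      rw [show i''+2 = i''+1+1 by omega, asc_succ]
    have hd := dsc_asc n T hbraid hcomm (i''+2) k hk (by omega) (by omega)
    rw [e1, e2] at hd
    have hsh := dshift n T hbraid hcomm (i''+2) (k+1) (by omega) (by omega) (by omega)
    rw [e1] at hsh
    have ih' := ih (by omega) (by omega)
    rw [e1] at ih'
    rw [pow_succ, pow_succ, e1, ih']
    calc asc T (i''+1) ^ k * dsc T (i''+2) k * asc T (i''+2)
        = asc T (i''+1) ^ k * (dsc T (i''+2) k * asc T (i''+1)) * T (i''+2) := by
          rw [hA]; simp [mul_assoc]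
      _ = asc T (i''+1) ^ k * (asc T i'' * dsc T (i''+2) (k+1)) * T (i''+2) := by rw [hd]
      _ = asc T (i''+1) ^ k * asc T i'' * (dsc T (i''+2) (k+1) * T (i''+2)) := by
          simp [mul_assoc]
      _ = asc T (i''+1) ^ k * asc T i'' * (T (i''+1) * dsc T (i''+2) (k+1)) := by rw [hsh]
      _ = asc T (i''+1) ^ k * asc T (i''+1) * dsc T (i''+2) (k+1) := by
          rw [asc_succ]; simp [mul_assoc]

include hbraid hcomm in
lemma telescope : ∀ i, 1 ≤ i → i + 1 ≤ n →
    asc T i ^ (i+1) = asc T (i-1) ^ i * (desc T i * asc T i) := by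
  intro i hi hin
  rw [pow_succ, asc_pow n T hbraid hcomm i i hi le_rfl hin, dsc_eq_desc, mul_assoc]

include hbraid hcomm in
lemma asc_sq : ∀ m, 1 ≤ m → m + 1 ≤ n → asc T m ^ 2 * T m = T 1 * asc T m ^ 2 := by
  intro m hm
  induction m, hm using Nat.le_induction with
  | base =>
    intro hn
    have h1 : asc T 1 = T 1 := by rw [show (1:ℕ) = 0+1 by omega, asc_succ, asc_zero, one_mul]
    rw [h1, pow_two, mul_assoc]
  | succ m hm ih =>
    intro hn
    obtain ⟨m'', rfl⟩ : ∃ m'', m = m'' + 1 := ⟨m - 1, by omega⟩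
    have ih' := ih (by omega)
    set a := asc T m'' with ha
    set s' := T (m''+1) with hs'
    set s := T (m''+1+1) with hs
    have hu : asc T (m''+1) = a * s' := asc_succ T m''
    have hv : asc T (m''+1+1) = a * s' * s := by rw [asc_succ, asc_succ]
    have hct : ∀ x : A, s*(a*x) = a*(s*x) := by
      intro x
      have hc : Commute s a := commute_T_asc n T hcomm (by omega) (by omega)
      rw [← mul_assoc, hc.eq, mul_assoc]
    have hb : s'*(s*s') = s*(s'*s) := by
      have := hbraid (m''+1) (by omega) (by omega)
      simpa [mul_assoc] using this
    have hbt : ∀ x : A, s*(s'*(s*x)) = s'*(s*(s'*x)) := by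
      intro x
      have h := congrArg (· * x) hb.symm
      simpa [mul_assoc] using h
    have hiht : ∀ x : A, a*(s'*(a*(s'*(s'*x)))) = T 1*(a*(s'*(a*(s'*x)))) := by
      intro x
      have h := congrArg (· * x) ih'
      simpa [hu, pow_two, mul_assoc] using h
    rw [hv]
    simp only [pow_two, mul_assoc]
    rw [hct (s'*(s*s)), hct (s'*s), hbt s, ← hb]
    exact hiht (s*s')

include hbraid hcomm in
lemma wrap : ∀ m k, 1 ≤ k → k ≤ m → m + 1 ≤ n →
    asc T m ^ (k+1) * T m = T k * asc T m ^ (k+1) := by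
  intro m k hk
  induction k, hk using Nat.le_induction with
  | base =>
    intro hm hn
    have h := asc_sq n T hbraid hcomm m hm hn
    rwa [show (2:ℕ) = 1+1 by omega] at h
  | succ k hk ih =>
    intro hm hn
    have ih' := ih (by omega) hn
    have hshift := shift n T hbraid hcomm m k (by omega) (by omega) hn
    rw [pow_succ', mul_assoc, ih', ← mul_assoc, hshift, mul_assoc, ← pow_succ']

include hbraid hcomm in
lemma chain : ∀ m k d, 1 ≤ k → k + d ≤ m → m + 1 ≤ n →
    asc T m ^ (m+1) * T k = asc T m ^ (m+1-d) * (T (k+d) * asc T m ^ d) := by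
  intro m k d
  induction d with
  | zero =>
    intro h1 h2 h3
    simp
  | succ d ihd =>
    intro h1 h2 h3
    have e5 : m+1-d = (m-d)+1 := by omega
    have e6 : m+1-(d+1) = m-d := by omega
    have e7 : k+(d+1) = k+d+1 := by omega
    have hshift := shift n T hbraid hcomm m (k+d) (by omega) (by omega) h3
    rw [ihd h1 (by omega) h3, e5, e6, e7, pow_succ, mul_assoc,
      ← mul_assoc (asc T m) (T (k+d)), hshift, mul_assoc, ← pow_succ']

include hbraid hcomm in
lemma central : ∀ m k, 1 ≤ k → k ≤ m → m + 1 ≤ n →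
    asc T m ^ (m+1) * T k = T k * asc T m ^ (m+1) := by
  intro m k h1 h2 h3
  have hc := chain n T hbraid hcomm m k (m-k) h1 (by omega) h3
  rw [show m+1-(m-k) = k+1 by omega, show k+(m-k) = m by omega] at hc
  rw [hc, ← mul_assoc, wrap n T hbraid hcomm m k h1 h2 h3, mul_assoc, ← pow_add,
    show k+1+(m-k) = m+1 by omega]

end withrel

def jmM (T : ℕ → A) (i : ℕ) : A := desc T (i-1) * asc T (i-1)

lemma commute_jmM {T : ℕ → A} {x : A} {i : ℕ}
    (h : ∀ l, 1 ≤ l → l ≤ i - 1 → Commute x (T l)) : Commute x (jmM T i) :=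
  (commute_desc h).mul_right (commute_asc h)

lemma pow_cancel {a b : A} (h : b * a = 1) : ∀ k, b^k * a^k = 1 := by
  intro k
  induction k with
  | zero => simp
  | succ k ih => rw [pow_succ b k, pow_succ' a k, mul_assoc, ← mul_assoc b, h, one_mul, ih]

lemma left_cancel {g a x y : A} (hg : g * a = 1) (h : a * x = a * y) : x = y := by
  have h2 := congrArg (g * ·) h
  simpa [← mul_assoc, hg] using h2

section inverse
variable (n : ℕ) (T Tinv : ℕ → A)
  (hTi : ∀ l, 1 ≤ l → l + 1 ≤ n → T l * Tinv l = 1)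
  (hiT : ∀ l, 1 ≤ l → l + 1 ≤ n → Tinv l * T l = 1)

include hTi in
lemma asc_mul_descInv : ∀ m, m + 1 ≤ n → asc T m * desc Tinv m = 1 := by
  intro m
  induction m with
  | zero => simp [asc_zero, desc_zero]
  | succ m ih =>
    intro h
    rw [asc_succ, desc_succ, mul_assoc, ← mul_assoc (T (m+1)),
      hTi (m+1) (by omega) (by omega), one_mul, ih (by omega)]

include hiT in
lemma descInv_mul_asc : ∀ m, m + 1 ≤ n → desc Tinv m * asc T m = 1 := by
  intro m
  induction m with
  | zero => simp [asc_zero, desc_zero]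
  | succ m ih =>
    intro h
    rw [asc_succ, desc_succ, mul_assoc, ← mul_assoc (desc Tinv m), ih (by omega), one_mul]
    exact hiT (m+1) (by omega) (by omega)

include hTi in
lemma jmM_mul_inv : ∀ i, 1 ≤ i → i ≤ n → jmM T i * jmM Tinv i = 1 := by
  intro i hi hn
  have h1 : asc T (i-1) * desc Tinv (i-1) = 1 := asc_mul_descInv n T Tinv hTi (i-1) (by omega)
  have h2 : desc T (i-1) * asc Tinv (i-1) = 1 :=
    descInv_mul_asc n Tinv T hTi (i-1) (by omega)
  simp only [jmM]
  calc desc T (i-1) * asc T (i-1) * (desc Tinv (i-1) * asc Tinv (i-1))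
      = desc T (i-1) * ((asc T (i-1) * desc Tinv (i-1)) * asc Tinv (i-1)) := by
        simp [mul_assoc]
    _ = desc T (i-1) * asc Tinv (i-1) := by rw [h1, one_mul]
    _ = 1 := h2

end inverse

section main
variable (n : ℕ) (T Tinv : ℕ → A)
  (hTi : ∀ l, 1 ≤ l → l + 1 ≤ n → T l * Tinv l = 1)
  (hiT : ∀ l, 1 ≤ l → l + 1 ≤ n → Tinv l * T l = 1)
  (hbraid : ∀ i, 1 ≤ i → i + 2 ≤ n → T i * T (i + 1) * T i = T (i + 1) * T i * T (i + 1))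
  (hcomm : ∀ i j, 1 ≤ i → i + 1 < j → j + 1 ≤ n → T i * T j = T j * T i)

omit hTi in
include hiT hbraid hcomm in
lemma jmM_commute : ∀ i j, 1 ≤ i → i ≤ j → j ≤ n →
    jmM T i * jmM T j = jmM T j * jmM T i := by
  intro i j hi hij hjn
  rcases eq_or_lt_of_le hij with rfl | hlt
  · rfl
  · obtain ⟨j'', rfl⟩ : ∃ j'', j = j'' + 2 := ⟨j - 2, by omega⟩
    have e1 : j'' + 2 - 1 = j'' + 1 := by omega
    have hM : jmM T (j''+2) = desc T (j''+1) * asc T (j''+1) := by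
      simp only [jmM, e1]
    -- telescoping
    have htel : asc T (j''+1) ^ (j''+1+1) = asc T j'' ^ (j''+1) * jmM T (j''+2) := by
      have h := telescope n T hbraid hcomm (j''+1) (by omega) (by omega)
      rw [show j''+1-1 = j'' by omega] at h
      rw [h, hM]
    -- commutation of the full twists with jmM T i
    have hFj : Commute (asc T (j''+1) ^ (j''+1+1)) (jmM T i) := by
      apply commute_jmM
      intro l hl hli
      exact central n T hbraid hcomm (j''+1) l hl (by omega) (by omega)
    have hFj1 : Commute (asc T j'' ^ (j''+1)) (jmM T i) := by
      apply commute_jmM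
      intro l hl hli
      exact central n T hbraid hcomm j'' l hl (by omega) (by omega)
    -- key computation
    have key : asc T j'' ^ (j''+1) * (jmM T i * jmM T (j''+2)) =
        asc T j'' ^ (j''+1) * (jmM T (j''+2) * jmM T i) := by
      calc asc T j'' ^ (j''+1) * (jmM T i * jmM T (j''+2))
          = (asc T j'' ^ (j''+1) * jmM T i) * jmM T (j''+2) := by rw [mul_assoc]
        _ = (jmM T i * asc T j'' ^ (j''+1)) * jmM T (j''+2) := by rw [hFj1.eq]
        _ = jmM T i * (asc T j'' ^ (j''+1) * jmM T (j''+2)) := by rw [mul_assoc]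
        _ = jmM T i * asc T (j''+1) ^ (j''+1+1) := by rw [← htel]
        _ = asc T (j''+1) ^ (j''+1+1) * jmM T i := by rw [hFj.eq]
        _ = asc T j'' ^ (j''+1) * jmM T (j''+2) * jmM T i := by rw [htel]
        _ = asc T j'' ^ (j''+1) * (jmM T (j''+2) * jmM T i) := by rw [mul_assoc]
    -- cancel the left factor, which is left-invertible
    have hginv : desc Tinv j'' * asc T j'' = 1 :=
      descInv_mul_asc n T Tinv hiT j'' (by omega)
    exact left_cancel (pow_cancel hginv (j''+1)) key

include hTi hiT hbraid hcomm in
lemma jmN_commute : ∀ i j, 1 ≤ i → i ≤ n → 1 ≤ j → j ≤ n →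
    jmM Tinv i * jmM Tinv j = jmM Tinv j * jmM Tinv i := by
  intro i j hi hin hj hjn
  have hMM : jmM T i * jmM T j = jmM T j * jmM T i := by
    rcases le_total i j with h | h
    · exact jmM_commute n T Tinv hiT hbraid hcomm i j hi h hjn
    · exact (jmM_commute n T Tinv hiT hbraid hcomm j i hj h hin).symm
  -- (M_a M_b) * (N_b N_a) = 1 and (N_a N_b) * (M_b M_a) = 1
  have hMN : ∀ a b, 1 ≤ a → a ≤ n → 1 ≤ b → b ≤ n →
      (jmM T a * jmM T b) * (jmM Tinv b * jmM Tinv a) = 1 := by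
    intro a b ha han hb hbn
    calc (jmM T a * jmM T b) * (jmM Tinv b * jmM Tinv a)
        = jmM T a * ((jmM T b * jmM Tinv b) * jmM Tinv a) := by simp [mul_assoc]
      _ = jmM T a * jmM Tinv a := by
          rw [jmM_mul_inv n T Tinv hTi b hb hbn, one_mul]
      _ = 1 := jmM_mul_inv n T Tinv hTi a ha han
  have hNM : ∀ a b, 1 ≤ a → a ≤ n → 1 ≤ b → b ≤ n →
      (jmM Tinv a * jmM Tinv b) * (jmM T b * jmM T a) = 1 := by
    intro a b ha han hb hbn
    calc (jmM Tinv a * jmM Tinv b) * (jmM T b * jmM T a)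
        = jmM Tinv a * ((jmM Tinv b * jmM T b) * jmM T a) := by simp [mul_assoc]
      _ = jmM Tinv a * jmM T a := by
          rw [jmM_mul_inv n Tinv T hiT b hb hbn, one_mul]
      _ = 1 := jmM_mul_inv n Tinv T hiT a ha han
  calc jmM Tinv i * jmM Tinv j
      = (jmM Tinv i * jmM Tinv j) * ((jmM T i * jmM T j) * (jmM Tinv j * jmM Tinv i)) := by
        rw [hMN i j hi hin hj hjn, mul_one]
    _ = ((jmM Tinv i * jmM Tinv j) * (jmM T j * jmM T i)) * (jmM Tinv j * jmM Tinv i) := by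
        rw [hMM]; simp [mul_assoc]
    _ = jmM Tinv j * jmM Tinv i := by
        rw [hNM i j hi hin hj hjn, one_mul]

end main
end JMaux

/-- In the type A Hecke algebra, the Jucys–Murphy elements pairwise commute. -/
theorem jucys_murphy_commute {F A : Type*} [Field F] [Ring A] [Algebra F A]
    (t : F) (ht : t ≠ 0) (n : ℕ) (T Tinv : ℕ → A)
    (hinv : ∀ i, 1 ≤ i → i + 1 ≤ n → T i * Tinv i = 1 ∧ Tinv i * T i = 1)
    (hquad : ∀ i, 1 ≤ i → i + 1 ≤ n → (T i - 1) * (T i + algebraMap F A t) = 0)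
    (hbraid : ∀ i, 1 ≤ i → i + 2 ≤ n → T i * T (i + 1) * T i = T (i + 1) * T i * T (i + 1))
    (hcomm : ∀ i j, 1 ≤ i → i + 1 < j → j + 1 ≤ n → T i * T j = T j * T i) :
    ∀ i j, 1 ≤ i → i ≤ n → 1 ≤ j → j ≤ n →
      jucysMurphy t Tinv i * jucysMurphy t Tinv j =
        jucysMurphy t Tinv j * jucysMurphy t Tinv i := by
  intro i j hi hin hj hjn
  have hTi : ∀ l, 1 ≤ l → l + 1 ≤ n → T l * Tinv l = 1 := fun l a b => (hinv l a b).1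
  have hiT : ∀ l, 1 ≤ l → l + 1 ≤ n → Tinv l * T l = 1 := fun l a b => (hinv l a b).2
  have hN := JMaux.jmN_commute n T Tinv hTi hiT hbraid hcomm i j hi hin hj hjn
  show (t^(i-1) • JMaux.jmM Tinv i) * (t^(j-1) • JMaux.jmM Tinv j) =
       (t^(j-1) • JMaux.jmM Tinv j) * (t^(i-1) • JMaux.jmM Tinv i)
  rw [smul_mul_assoc, smul_mul_assoc, mul_smul_comm, mul_smul_comm, smul_smul, smul_smul,
    hN, mul_comm (t^(i-1))]
end

section
/- For every partition λ and every integer r with r ≥ |λ| + λ₁, the identity Σ_ν |SYT(ν)| = C(r, |λ|)·|SYT(λ)| holds, where the sum ranges over partitions ν of size r such that the skew diagram λ^{(r+λ₁)}/ν is a horizontal strip, λ^{(n)} denotes the partition (n - |λ|, λ₁, λ₂, ...), and C(r, |λ|) is the binomial coefficient. -/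
/-- A standard Young tableau of the skew shape `Λ / μ` (for `μ ⊆ Λ`): a filling of the
cells of `Λ` not in `μ` by the numbers `1, …, |Λ| - |μ|`, bijectively, strictly
increasing along rows and columns, and zero outside the skew diagram. -/
def IsSkewSYT (Λ μ : YoungDiagram) (f : ℕ × ℕ → ℕ) : Prop :=
  μ ≤ Λ ∧
  (∀ c : ℕ × ℕ, c ∉ Λ.cells \ μ.cells → f c = 0) ∧
  Set.BijOn f ↑(Λ.cells \ μ.cells) ↑(Finset.Icc 1 (Λ.card - μ.card)) ∧
  (∀ i j₁ j₂ : ℕ, (i, j₁) ∈ Λ.cells \ μ.cells → (i, j₂) ∈ Λ.cells \ μ.cells →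
    j₁ < j₂ → f (i, j₁) < f (i, j₂)) ∧
  (∀ i₁ i₂ j : ℕ, (i₁, j) ∈ Λ.cells \ μ.cells → (i₂, j) ∈ Λ.cells \ μ.cells →
    i₁ < i₂ → f (i₁, j) < f (i₂, j))

/-- The skew diagram `Λ / ν` is a horizontal strip: at most one cell in each column. -/
def IsHorizontalStrip (Λ ν : YoungDiagram) : Prop :=
  ν ≤ Λ ∧ ∀ i₁ i₂ j : ℕ, (i₁, j) ∈ Λ.cells \ ν.cells → (i₂, j) ∈ Λ.cells \ ν.cells → i₁ = i₂

/-!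
Let `N(r, λ)` count the standard Young tableaux with `r` cells whose shape `ν` makes `ν / λ` a
horizontal strip. For `|ν| = r`, `λ^{(r+λ₁)} / ν` is a horizontal strip iff `ν / λ` is one: both
say that the rows interlace, and the bound on the first row of `ν` comes for free from `|ν| = r`.

Deleting the largest entry of a tableau counted by `N(r+1, λ)` leaves a tableau of some shape `π`
with `r` cells, together with the cell it was deleted from. Comparing the rows where a cell can be
added to `π` with those where a cell can be removed from `λ` gives the local rule
`#{ν ⋗ π : ν / λ strip} = [π / λ strip] + #{μ ⋖ λ : π / μ strip}`, and summing over `π` yields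
`N(r+1, λ) = N(r, λ) + Σ_{μ ⋖ λ} N(r, μ)`. The case `r + 1 = |λ|` of this recursion is the
branching rule `f^λ = Σ_{μ ⋖ λ} f^μ`, and then `N(r, λ) = C(r, |λ|) f^λ` follows by induction on `r`
from Pascal's rule.
-/

open Finset

namespace YoungDiagram

variable {μ ν : YoungDiagram}

theorem le_iff_rowLen_le : μ ≤ ν ↔ ∀ i, μ.rowLen i ≤ ν.rowLen i := by
  refine ⟨fun h i => le_of_forall_lt fun j hj => ?_, fun h ⟨i, j⟩ hc => ?_⟩
  · exact mem_iff_lt_rowLen.1 (h (mem_iff_lt_rowLen.2 hj))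
  · exact mem_iff_lt_rowLen.2 ((mem_iff_lt_rowLen.1 hc).trans_le (h i))

theorem ext_rowLen (h : ∀ i, μ.rowLen i = ν.rowLen i) : μ = ν :=
  le_antisymm (le_iff_rowLen_le.2 fun i => (h i).le) (le_iff_rowLen_le.2 fun i => (h i).ge)

theorem rowLen_eq_zero {i : ℕ} (h : μ.colLen 0 ≤ i) : μ.rowLen i = 0 := by
  by_contra h'
  exact absurd (mem_iff_lt_colLen.1 (mem_iff_lt_rowLen.2 (Nat.pos_of_ne_zero h'))) (not_lt.2 h)

theorem rowLen_eq_getD_rowLens (μ : YoungDiagram) (i : ℕ) : μ.rowLen i = μ.rowLens.getD i 0 := by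
  by_cases h : i < μ.colLen 0
  · rw [List.getD_eq_getElem _ _ (length_rowLens ▸ h), get_rowLens]
  · rw [List.getD_eq_default _ _ (by simpa using h), rowLen_eq_zero (not_lt.1 h)]

theorem card_mono : Monotone YoungDiagram.card :=
  fun _ _ h => Finset.card_le_card (cells_subset_iff.2 h)

theorem card_strictMono : StrictMono YoungDiagram.card :=
  fun _ _ h => Finset.card_lt_card (cells_ssubset_iff.2 h)

theorem eq_of_le_of_card_le (h : μ ≤ ν) (hc : ν.card ≤ μ.card) : μ = ν :=
  YoungDiagram.ext (Finset.eq_of_subset_of_card_le (cells_subset_iff.2 h) hc)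

theorem rowLen_le_card (μ : YoungDiagram) (i : ℕ) : μ.rowLen i ≤ μ.card := by
  rw [rowLen_eq_card]
  exact Finset.card_le_card (filter_subset _ _)

theorem colLen_le_card (μ : YoungDiagram) (j : ℕ) : μ.colLen j ≤ μ.card := by
  rw [colLen_eq_card]
  exact Finset.card_le_card (filter_subset _ _)

theorem mem_range_card_product {c : ℕ × ℕ} (hc : c ∈ μ) :
    c ∈ range μ.card ×ˢ range μ.card := by
  rw [mem_product, mem_range, mem_range]
  exact ⟨(mem_iff_lt_colLen.1 hc).trans_le (μ.colLen_le_card _),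
    (mem_iff_lt_rowLen.1 hc).trans_le (μ.rowLen_le_card _)⟩

theorem card_eq_sum_rowLen (μ : YoungDiagram) {K : ℕ} (hK : μ.card ≤ K) :
    μ.card = ∑ i ∈ range K, μ.rowLen i := by
  rw [YoungDiagram.card, card_eq_sum_card_fiberwise (f := Prod.fst) (t := range K)]
  · exact sum_congr rfl fun i _ => (rowLen_eq_card μ).symm
  · intro c hc
    exact mem_range.2 (((mem_product.1 (mem_range_card_product hc)).1 |> mem_range.1).trans_le hK)

theorem finite_of_card_le (P : YoungDiagram → Prop) (n : ℕ) (h : ∀ ν, P ν → ν.card ≤ n) :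
    Finite {ν // P ν} := by
  refine Finite.of_injective (β := (range n ×ˢ range n).powerset)
    (fun ν => ⟨ν.1.cells, mem_powerset.2 fun c hc => ?_⟩) fun ν ν' hνν' => ?_
  · have := h ν.1 ν.2
    exact product_subset_product (range_subset_range.2 this) (range_subset_range.2 this)
      (mem_range_card_product hc)
  · exact Subtype.ext (YoungDiagram.ext (congrArg Subtype.val hνν'))

def ofRowLen (p : ℕ → ℕ) (hp : Antitone p) (hfin : ∃ N, p N = 0) : YoungDiagram where
  cells := (range (Nat.find hfin) ×ˢ range (p 0)).filter fun c => c.2 < p c.1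
  isLowerSet := by
    intro c d ⟨h₁, h₂⟩ hc
    simp only [coe_filter, mem_product, mem_range, Set.mem_ofPred_eq] at hc ⊢
    have := hp h₁
    have := hp (Nat.zero_le d.1)
    omega

theorem mem_ofRowLen {p : ℕ → ℕ} {hp : Antitone p} {hfin : ∃ N, p N = 0} {c : ℕ × ℕ} :
    c ∈ ofRowLen p hp hfin ↔ c.2 < p c.1 := by
  refine ⟨fun hc => (mem_filter.1 hc).2, fun hc => mem_filter.2 ⟨?_, hc⟩⟩
  have hN : c.1 < Nat.find hfin := by
    by_contra h
    have := hp (not_lt.1 h)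
    rw [Nat.find_spec hfin] at this
    omega
  exact mem_product.2 ⟨mem_range.2 hN, mem_range.2 (hc.trans_le (hp (Nat.zero_le _)))⟩

@[simp]
theorem rowLen_ofRowLen {p : ℕ → ℕ} {hp : Antitone p} {hfin : ∃ N, p N = 0} (i : ℕ) :
    (ofRowLen p hp hfin).rowLen i = p i :=
  eq_of_forall_lt_iff fun j => by rw [← mem_iff_lt_rowLen, mem_ofRowLen]

def IsAddableRow (μ : YoungDiagram) (i : ℕ) : Prop :=
  i = 0 ∨ μ.rowLen i < μ.rowLen (i - 1)

def IsRemovableRow (μ : YoungDiagram) (j : ℕ) : Prop :=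
  μ.rowLen (j + 1) < μ.rowLen j

def addToRow (μ : YoungDiagram) (i : ℕ) (h : μ.IsAddableRow i) : YoungDiagram :=
  ofRowLen (fun t => μ.rowLen t + if t = i then 1 else 0)
    (antitone_nat_of_succ_le fun t => by
      have := μ.rowLen_anti t (t + 1) t.le_succ
      split_ifs with h₁
      · omega
      · subst h₁
        rcases h with h | h
        · omega
        · rw [Nat.add_sub_cancel] at h; omega
      · omega
      · omega)
    ⟨μ.colLen 0 + i + 1, by rw [rowLen_eq_zero (by omega), if_neg (by omega)]⟩

def removeFromRow (μ : YoungDiagram) (j : ℕ) (h : μ.IsRemovableRow j) : YoungDiagram :=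
  ofRowLen (fun t => μ.rowLen t - if t = j then 1 else 0)
    (antitone_nat_of_succ_le fun t => by
      have := μ.rowLen_anti t (t + 1) t.le_succ
      have h' : μ.rowLen (j + 1) < μ.rowLen j := h
      split_ifs <;> subst_vars <;> omega)
    ⟨μ.colLen 0, by rw [rowLen_eq_zero le_rfl, Nat.zero_sub]⟩

@[simp]
theorem rowLen_addToRow {i : ℕ} {h : μ.IsAddableRow i} (t : ℕ) :
    (μ.addToRow i h).rowLen t = μ.rowLen t + if t = i then 1 else 0 :=
  rowLen_ofRowLen t

@[simp]
theorem rowLen_removeFromRow {j : ℕ} {h : μ.IsRemovableRow j} (t : ℕ) :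
    (μ.removeFromRow j h).rowLen t = μ.rowLen t - if t = j then 1 else 0 :=
  rowLen_ofRowLen t

theorem cells_addToRow {i : ℕ} (h : μ.IsAddableRow i) :
    (μ.addToRow i h).cells = insert (i, μ.rowLen i) μ.cells := by
  ext ⟨a, b⟩
  simp only [mem_insert, mem_cells, mem_iff_lt_rowLen, rowLen_addToRow, Prod.mk.injEq]
  split_ifs with hai
  · subst hai; omega
  · omega

theorem card_addToRow {i : ℕ} (h : μ.IsAddableRow i) : (μ.addToRow i h).card = μ.card + 1 := by
  rw [YoungDiagram.card, cells_addToRow, card_insert_of_notMem (by simp [mem_iff_lt_rowLen])]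

theorem covBy_of_le_of_card_eq (hle : μ ≤ ν) (hcard : ν.card = μ.card + 1) : μ ⋖ ν :=
  ⟨lt_of_le_of_ne hle (by rintro rfl; omega), fun κ hμκ hκν => by
    have := card_strictMono hμκ
    have := card_strictMono hκν
    omega⟩

theorem covBy_addToRow {i : ℕ} (h : μ.IsAddableRow i) : μ ⋖ μ.addToRow i h :=
  covBy_of_le_of_card_eq (le_iff_rowLen_le.2 fun t => by simp) (card_addToRow h)

theorem exists_addToRow_eq_of_covBy (h : μ ⋖ ν) : ∃ i hi, μ.addToRow i hi = ν := by
  have hex : ∃ i, μ.rowLen i < ν.rowLen i := by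
    by_contra! hge
    exact h.lt.ne (ext_rowLen fun i => le_antisymm (le_iff_rowLen_le.1 h.le i) (hge i))
  -- the topmost row where `ν` is longer than `μ` is addable
  have hi : μ.IsAddableRow (Nat.find hex) := by
    refine (Nat.eq_zero_or_pos _).imp id fun hpos => ?_
    have hprev := Nat.find_min hex (Nat.sub_lt hpos one_pos)
    have := ν.rowLen_anti _ _ (Nat.sub_le (Nat.find hex) 1)
    have := Nat.find_spec hex
    omega
  refine ⟨_, hi, (h.eq_or_eq (covBy_addToRow hi).le (le_iff_rowLen_le.2 fun t => ?_)).resolve_left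
    (covBy_addToRow hi).lt.ne'⟩
  have := le_iff_rowLen_le.1 h.le t
  have := Nat.find_spec hex
  simp only [rowLen_addToRow]
  split_ifs with ht
  · subst ht; omega
  · omega

theorem covBy_iff_le_and_card_eq : μ ⋖ ν ↔ μ ≤ ν ∧ ν.card = μ.card + 1 := by
  refine ⟨fun h => ⟨h.le, ?_⟩, fun h => covBy_of_le_of_card_eq h.1 h.2⟩
  obtain ⟨i, hi, rfl⟩ := exists_addToRow_eq_of_covBy h
  exact card_addToRow hi

theorem isAddableRow_removeFromRow {j : ℕ} (h : μ.IsRemovableRow j) :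
    (μ.removeFromRow j h).IsAddableRow j := by
  refine (Nat.eq_zero_or_pos j).imp id fun hj => ?_
  have := μ.rowLen_anti (j - 1) j (Nat.sub_le j 1)
  have h' : μ.rowLen (j + 1) < μ.rowLen j := h
  simp only [rowLen_removeFromRow, if_pos, show j - 1 ≠ j by omega, if_false]
  omega

theorem addToRow_removeFromRow {j : ℕ} (h : μ.IsRemovableRow j) :
    (μ.removeFromRow j h).addToRow j (isAddableRow_removeFromRow h) = μ := by
  refine ext_rowLen fun t => ?_
  have h' : μ.rowLen (j + 1) < μ.rowLen j := h
  simp only [rowLen_addToRow, rowLen_removeFromRow]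
  split_ifs with ht
  · subst ht; omega
  · omega

theorem removeFromRow_covBy {j : ℕ} (h : μ.IsRemovableRow j) : μ.removeFromRow j h ⋖ μ := by
  conv_rhs => rw [← addToRow_removeFromRow h]
  exact covBy_addToRow _

theorem exists_removeFromRow_eq_of_covBy (h : μ ⋖ ν) : ∃ j hj, ν.removeFromRow j hj = μ := by
  obtain ⟨j, hj, rfl⟩ := exists_addToRow_eq_of_covBy h
  have := μ.rowLen_anti j (j + 1) j.le_succ
  refine ⟨j, by simp only [IsRemovableRow, rowLen_addToRow, if_neg j.succ_ne_self, if_true]; omega,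
    ext_rowLen fun t => ?_⟩
  simp only [rowLen_removeFromRow, rowLen_addToRow]
  split_ifs <;> omega

theorem isHorizontalStrip_iff_rowLen {Λ ν : YoungDiagram} :
    IsHorizontalStrip Λ ν ↔
      (∀ i, ν.rowLen i ≤ Λ.rowLen i) ∧ ∀ i, Λ.rowLen (i + 1) ≤ ν.rowLen i := by
  simp only [IsHorizontalStrip, mem_sdiff, mem_cells, mem_iff_lt_rowLen, le_iff_rowLen_le]
  refine and_congr_right fun _ => ⟨fun h i => ?_, fun h i₁ i₂ j h₁ h₂ => ?_⟩
  · by_contra! hlt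
    have := Λ.rowLen_anti i (i + 1) i.le_succ
    have := ν.rowLen_anti i (i + 1) i.le_succ
    exact absurd (h i (i + 1) (ν.rowLen i) ⟨by omega, by omega⟩ ⟨hlt, by omega⟩) (by omega)
  · have key : ∀ a b, a < b → j < Λ.rowLen b → ν.rowLen a ≤ j → False := fun a b hab hb ha =>
      absurd (Λ.rowLen_anti (a + 1) b hab) (by have := h a; omega)
    rcases lt_trichotomy i₁ i₂ with hlt | heq | hgt
    · exact (key _ _ hlt h₂.1 (not_lt.1 h₁.2)).elim
    · exact heq
    · exact (key _ _ hgt h₁.1 (not_lt.1 h₂.2)).elim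

theorem isHorizontalStrip_refl (μ : YoungDiagram) : IsHorizontalStrip μ μ :=
  isHorizontalStrip_iff_rowLen.2 ⟨fun _ => le_rfl, fun i => μ.rowLen_anti _ _ i.le_succ⟩

variable {π lam : YoungDiagram}

theorem card_covBy_and_eq_card_addToRow (P : YoungDiagram → Prop) :
    Nat.card {ν // π ⋖ ν ∧ P ν} = Nat.card {i // ∃ h : π.IsAddableRow i, P (π.addToRow i h)} := by
  refine (Nat.card_eq_of_bijective (fun i => ⟨π.addToRow i.1 i.2.1, covBy_addToRow _, i.2.2⟩)
    ⟨fun i i' hii' => Subtype.ext ?_, fun ν => ?_⟩).symm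
  · have := congrArg (fun ν => rowLen (Subtype.val ν) i.1) hii'
    simp only [rowLen_addToRow, if_pos] at this
    by_contra hne
    simp [hne] at this
  · obtain ⟨i, hi, hν⟩ := exists_addToRow_eq_of_covBy ν.2.1
    exact ⟨⟨i, hi, hν ▸ ν.2.2⟩, Subtype.ext hν⟩

theorem card_covBy_and_eq_card_removeFromRow (P : YoungDiagram → Prop) :
    Nat.card {μ // μ ⋖ lam ∧ P μ} =
      Nat.card {j // ∃ h : lam.IsRemovableRow j, P (lam.removeFromRow j h)} := by
  refine (Nat.card_eq_of_bijective (fun j => ⟨lam.removeFromRow j.1 j.2.1, removeFromRow_covBy _,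
    j.2.2⟩) ⟨fun j j' hjj' => Subtype.ext ?_, fun μ => ?_⟩).symm
  · have := congrArg (fun μ => rowLen (Subtype.val μ) j.1) hjj'
    have hpos : 0 < lam.rowLen j.1 := (Nat.zero_le _).trans_lt j.2.1
    simp only [rowLen_removeFromRow, if_pos] at this
    by_contra hne
    simp only [hne, if_false] at this
    omega
  · obtain ⟨j, hj, hμ⟩ := exists_removeFromRow_eq_of_covBy μ.2.1
    exact ⟨⟨j, hj, hμ ▸ μ.2.2⟩, Subtype.ext hμ⟩

theorem isAddableRow_zero (μ : YoungDiagram) : μ.IsAddableRow 0 :=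
  Or.inl rfl

theorem isHorizontalStrip_addToRow_zero (H : IsHorizontalStrip π lam) :
    IsHorizontalStrip (π.addToRow 0 π.isAddableRow_zero) lam := by
  rw [isHorizontalStrip_iff_rowLen] at H ⊢
  refine ⟨fun t => ?_, fun t => ?_⟩ <;> simp only [rowLen_addToRow]
  · exact (H.1 t).trans (Nat.le_add_right _ _)
  · simpa using H.2 t

theorem isHorizontalStrip_addToRow_succ_iff (H : IsHorizontalStrip π lam) (j : ℕ) :
    (∃ h, IsHorizontalStrip (π.addToRow (j + 1) h) lam) ↔
      ∃ h, IsHorizontalStrip π (lam.removeFromRow j h) := by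
  rw [isHorizontalStrip_iff_rowLen] at H
  obtain ⟨H₁, H₂⟩ := H
  simp only [isHorizontalStrip_iff_rowLen, rowLen_addToRow, rowLen_removeFromRow, add_left_inj]
  -- both sides say exactly that `π.rowLen (j + 1) < lam.rowLen j`
  constructor
  · rintro ⟨-, -, h⟩
    have hj := h j
    have := H₁ (j + 1)
    simp only [if_true] at hj
    refine ⟨show _ < _ by omega, fun t => ?_, fun t => ?_⟩ <;>
      have := H₁ t <;> have := H₂ t <;> split_ifs with ht <;> (try subst ht) <;> omega
  · rintro ⟨hrem, -, h⟩
    have hj := h j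
    have := H₁ j
    have hrem' : lam.rowLen (j + 1) < lam.rowLen j := hrem
    simp only [if_true] at hj
    refine ⟨Or.inr (by rw [Nat.add_sub_cancel]; omega), fun t => ?_, fun t => ?_⟩ <;>
      have := H₁ t <;> have := H₂ t <;> split_ifs with ht <;> (try subst ht) <;> omega

theorem rowLen_eq_succ_of_not_isHorizontalStrip (H : ¬IsHorizontalStrip π lam) {i : ℕ}
    (h₁ : ∀ t, lam.rowLen t ≤ π.rowLen t + if t = i then 1 else 0)
    (h₂ : ∀ t, π.rowLen (t + 1) ≤ lam.rowLen t) : lam.rowLen i = π.rowLen i + 1 := by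
  obtain ⟨t₀, ht₀⟩ : ∃ t, π.rowLen t < lam.rowLen t := by
    by_contra! h
    exact H (isHorizontalStrip_iff_rowLen.2 ⟨h, h₂⟩)
  obtain rfl : t₀ = i := by
    by_contra hne
    have := h₁ t₀
    simp only [hne, if_false] at this
    omega
  have := h₁ t₀
  simp only [if_true] at this
  omega

theorem isHorizontalStrip_addToRow_iff (H : ¬IsHorizontalStrip π lam) (i : ℕ) :
    (∃ h, IsHorizontalStrip (π.addToRow i h) lam) ↔
      ∃ h, IsHorizontalStrip π (lam.removeFromRow i h) := by
  simp only [isHorizontalStrip_iff_rowLen, rowLen_addToRow, rowLen_removeFromRow]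
  -- the first conditions on both sides agree, and force `lam.rowLen i = π.rowLen i + 1`
  constructor
  · rintro ⟨-, h₁, h₂⟩
    have hle : ∀ t, π.rowLen (t + 1) ≤ lam.rowLen t := fun t => by have := h₂ t; omega
    have hi := rowLen_eq_succ_of_not_isHorizontalStrip H h₁ hle
    have h₁i := h₁ (i + 1)
    rw [if_neg i.succ_ne_self] at h₁i
    have := π.rowLen_anti i (i + 1) i.le_succ
    refine ⟨show _ < _ by omega, fun t => ?_, fun t => ?_⟩ <;>
      have := h₁ t <;> have := hle t <;> split_ifs at * with ht <;> (try subst ht) <;> omega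
  · rintro ⟨hrem, h₁, h₂⟩
    have hle : ∀ t, π.rowLen (t + 1) ≤ lam.rowLen t := fun t => by have := h₂ t; omega
    have h₁' : ∀ t, lam.rowLen t ≤ π.rowLen t + if t = i then 1 else 0 := fun t => by
      have := h₁ t; split_ifs at * <;> omega
    have hi := rowLen_eq_succ_of_not_isHorizontalStrip H h₁' hle
    refine ⟨?_, h₁', fun t => ?_⟩
    · refine (Nat.eq_zero_or_pos i).imp id fun hpos => ?_
      have := lam.rowLen_anti (i - 1) i (Nat.sub_le _ _)
      have := h₁' (i - 1)
      simp only [show i - 1 ≠ i by omega, if_false] at this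
      omega
    · have := hle t
      split_ifs with ht
      · subst ht
        have := lam.rowLen_anti t (t + 1) t.le_succ
        omega
      · omega

open Classical in
theorem card_covBy_isHorizontalStrip (π lam : YoungDiagram) :
    Nat.card {ν // π ⋖ ν ∧ IsHorizontalStrip ν lam} =
      (if IsHorizontalStrip π lam then 1 else 0) +
        Nat.card {μ // μ ⋖ lam ∧ IsHorizontalStrip π μ} := by
  rw [card_covBy_and_eq_card_addToRow, card_covBy_and_eq_card_removeFromRow]
  split_ifs with H
  · have : Finite {j // ∃ h : lam.IsRemovableRow j, IsHorizontalStrip π (lam.removeFromRow j h)} :=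
      Finite.of_injective (β := Fin (lam.colLen 0))
        (fun j => ⟨j.1, by_contra fun hj => by
          have := j.2.1
          rw [IsRemovableRow, rowLen_eq_zero (not_lt.1 hj)] at this
          omega⟩)
        fun j j' h => Subtype.ext (congrArg Fin.val h)
    rw [add_comm, ← Finite.card_option]
    refine (Nat.card_eq_of_bijective
      (fun o => o.elim ⟨0, _, isHorizontalStrip_addToRow_zero H⟩
        fun j => ⟨j.1 + 1, (isHorizontalStrip_addToRow_succ_iff H j.1).2 j.2⟩)
      ⟨?_, ?_⟩).symm
    · rintro (_ | j) (_ | j') h <;> simp_all [Subtype.ext_iff]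
    · rintro ⟨_ | j, hj⟩
      · exact ⟨none, rfl⟩
      · exact ⟨some ⟨j, (isHorizontalStrip_addToRow_succ_iff H j).1 hj⟩, rfl⟩
  · rw [zero_add]
    exact Nat.card_congr (Equiv.subtypeEquivRight (isHorizontalStrip_addToRow_iff H))

def sublevel (ν : YoungDiagram) (f : ℕ × ℕ → ℕ) (hf : MonotoneOn f ν.cells) (m : ℕ) :
    YoungDiagram where
  cells := ν.cells.filter (f · ≤ m)
  isLowerSet c d hdc hc := by
    rw [coe_filter] at hc ⊢
    exact ⟨ν.isLowerSet hdc hc.1, (hf (ν.isLowerSet hdc hc.1) hc.1 hdc).trans hc.2⟩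

theorem mem_sublevel {ν : YoungDiagram} {f : ℕ × ℕ → ℕ} {hf : MonotoneOn f ν.cells} {m : ℕ}
    {c : ℕ × ℕ} : c ∈ ν.sublevel f hf m ↔ c ∈ ν ∧ f c ≤ m :=
  mem_filter

theorem sublevel_le (ν : YoungDiagram) (f : ℕ × ℕ → ℕ) (hf : MonotoneOn f ν.cells) (m : ℕ) :
    ν.sublevel f hf m ≤ ν :=
  fun _ hc => (mem_sublevel.1 hc).1

end YoungDiagram

open YoungDiagram

theorem isSkewSYT_bot_iff {ν : YoungDiagram} {f : ℕ × ℕ → ℕ} :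
    IsSkewSYT ν ⊥ f ↔
      (∀ c ∉ ν, f c = 0) ∧ Set.BijOn f ν.cells (Icc 1 ν.card) ∧ StrictMonoOn f ν.cells := by
  simp only [IsSkewSYT, cells_bot, sdiff_empty, bot_le, true_and, mem_cells, YoungDiagram.card,
    card_empty, Nat.sub_zero]
  refine and_congr_right fun _ => and_congr_right fun _ => ⟨fun ⟨hrow, hcol⟩ => ?_, fun h => ?_⟩
  · rintro ⟨i, j⟩ hc ⟨i', j'⟩ hd hlt
    rcases Prod.lt_iff.1 hlt with ⟨hi, hj⟩ | ⟨hi, hj⟩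
    · have hcorner : (i', j) ∈ ν := ν.up_left_mem le_rfl hj hd
      refine (hcol i i' j hc hcorner hi).trans_le ?_
      rcases hj.eq_or_lt with rfl | hj
      · exact le_rfl
      · exact (hrow i' j j' hcorner hd hj).le
    · have hcorner : (i, j') ∈ ν := ν.up_left_mem hi le_rfl hd
      refine (hrow i j j' hc hcorner hj).trans_le ?_
      rcases hi.eq_or_lt with rfl | hi
      · exact le_rfl
      · exact (hcol i i' j' hcorner hd hi).le
  · exact ⟨fun i j₁ j₂ h₁ h₂ hj => h h₁ h₂ (Prod.mk_lt_mk_iff_right.2 hj),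
      fun i₁ i₂ j h₁ h₂ hi => h h₁ h₂ (Prod.mk_lt_mk_iff_left.2 hi)⟩

namespace IsSkewSYT

variable {ν : YoungDiagram} {f : ℕ × ℕ → ℕ}

theorem apply_eq_zero (hf : IsSkewSYT ν ⊥ f) {c : ℕ × ℕ} (hc : c ∉ ν) : f c = 0 :=
  (isSkewSYT_bot_iff.1 hf).1 c hc

theorem apply_mem_Icc (hf : IsSkewSYT ν ⊥ f) {c : ℕ × ℕ} (hc : c ∈ ν) :
    f c ∈ Icc 1 ν.card :=
  (isSkewSYT_bot_iff.1 hf).2.1.mapsTo hc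

theorem apply_le_card (hf : IsSkewSYT ν ⊥ f) (c : ℕ × ℕ) : f c ≤ ν.card := by
  by_cases hc : c ∈ ν
  · exact (mem_Icc.1 (hf.apply_mem_Icc hc)).2
  · exact (hf.apply_eq_zero hc).trans_le (Nat.zero_le _)

theorem apply_ne_zero_iff (hf : IsSkewSYT ν ⊥ f) {c : ℕ × ℕ} : f c ≠ 0 ↔ c ∈ ν :=
  ⟨fun h => by_contra fun hc => h (hf.apply_eq_zero hc),
    fun hc => (Nat.one_le_iff_ne_zero.1 (mem_Icc.1 (hf.apply_mem_Icc hc)).1)⟩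

theorem monotoneOn (hf : IsSkewSYT ν ⊥ f) : MonotoneOn f ν.cells :=
  (isSkewSYT_bot_iff.1 hf).2.2.monotoneOn

theorem bijOn_sublevel (hf : IsSkewSYT ν ⊥ f) {m : ℕ} (hm : m ≤ ν.card) :
    Set.BijOn f (ν.sublevel f hf.monotoneOn m).cells (Icc 1 m) := by
  have hbij := (isSkewSYT_bot_iff.1 hf).2.1
  refine ⟨fun c hc => ?_, hbij.injOn.mono fun c hc => (mem_sublevel.1 hc).1, fun v hv => ?_⟩
  · obtain ⟨hcν, hcm⟩ := mem_sublevel.1 hc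
    exact mem_Icc.2 ⟨(mem_Icc.1 (hf.apply_mem_Icc hcν)).1, hcm⟩
  · obtain ⟨c, hc, rfl⟩ := hbij.surjOn (Icc_subset_Icc_right hm hv)
    exact ⟨c, mem_sublevel.2 ⟨hc, (mem_Icc.1 hv).2⟩, rfl⟩

theorem card_sublevel (hf : IsSkewSYT ν ⊥ f) {m : ℕ} (hm : m ≤ ν.card) :
    (ν.sublevel f hf.monotoneOn m).card = m := by
  have hbij := hf.bijOn_sublevel hm
  rw [YoungDiagram.card, card_nbij f hbij.mapsTo hbij.injOn hbij.surjOn, Nat.card_Icc,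
    Nat.add_sub_cancel]

theorem sublevel (hf : IsSkewSYT ν ⊥ f) {m : ℕ} (hm : m ≤ ν.card) :
    IsSkewSYT (ν.sublevel f hf.monotoneOn m) ⊥ fun c => if f c ≤ m then f c else 0 := by
  have heq : Set.EqOn (fun c => if f c ≤ m then f c else 0) f (ν.sublevel f hf.monotoneOn m).cells :=
    fun c hc => if_pos (mem_sublevel.1 hc).2
  refine isSkewSYT_bot_iff.2 ⟨fun c hc => ?_, ?_, ?_⟩
  · split_ifs with hcm
    · exact hf.apply_eq_zero fun hcν => hc (mem_sublevel.2 ⟨hcν, hcm⟩)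
    · rfl
  · rw [hf.card_sublevel hm]
    exact (hf.bijOn_sublevel hm).congr heq.symm
  · exact ((isSkewSYT_bot_iff.1 hf).2.2.mono fun c hc => (mem_sublevel.1 hc).1).congr heq.symm

theorem extend_of_covBy {π : YoungDiagram} {g : ℕ × ℕ → ℕ} (hg : IsSkewSYT π ⊥ g) (h : π ⋖ ν) :
    IsSkewSYT ν ⊥ fun c => if c ∈ π then g c else if c ∈ ν then ν.card else 0 := by
  obtain ⟨i, hi, rfl⟩ := exists_addToRow_eq_of_covBy h
  set c₀ := (i, π.rowLen i)
  have hc₀ : c₀ ∉ π := by simp [c₀, mem_iff_lt_rowLen]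
  have hmem : ∀ c, c ∈ π.addToRow i hi ↔ c = c₀ ∨ c ∈ π := fun c => by
    rw [← mem_cells, cells_addToRow, mem_insert, mem_cells]
  have hc₀mem : c₀ ∈ π.addToRow i hi := (hmem c₀).2 (Or.inl rfl)
  obtain ⟨-, hbij, hmono⟩ := isSkewSYT_bot_iff.1 hg
  set F := fun c => if c ∈ π then g c else if c ∈ π.addToRow i hi then (π.addToRow i hi).card else 0
  have hFc₀ : F c₀ = π.card + 1 := by simp [F, hc₀, hc₀mem, card_addToRow]
  refine isSkewSYT_bot_iff.2 ⟨fun c hc => ?_, ?_, fun c hc d hd hcd => ?_⟩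
  · rw [hmem, not_or] at hc
    simp [F, hc.2, (hmem c).not.2 (not_or.2 hc)]
  · have := (hbij.congr fun c hc => (if_pos hc).symm : Set.BijOn F _ _).insert (a := c₀)
      (by rw [hFc₀]; simp)
    rwa [hFc₀, ← coe_insert, ← coe_insert, insert_Icc_right_eq_Icc_add_one (by omega),
      ← cells_addToRow, ← card_addToRow hi] at this
  · rcases (hmem d).1 hd with rfl | hdπ
    · rcases (hmem c).1 hc with rfl | hcπ
      · exact absurd hcd (lt_irrefl _)
      · rw [hFc₀]
        simp only [F, hcπ, if_true]
        exact Nat.lt_succ_of_le (hg.apply_le_card c)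
    · have hcπ : c ∈ π := π.isLowerSet hcd.le hdπ
      simp only [F, hcπ, hdπ, if_true]
      exact hmono hcπ hdπ hcd

end IsSkewSYT

/-- Standard Young tableaux with `n` cells, of any shape. -/
@[ext]
structure StdTableau (n : ℕ) where
  shape : YoungDiagram
  entry : ℕ × ℕ → ℕ
  card_shape : shape.card = n
  isSkewSYT : IsSkewSYT shape ⊥ entry

namespace StdTableau

instance (n : ℕ) : Finite (StdTableau n) := by
  refine Finite.of_injective (β := (range n ×ˢ range n : Finset (ℕ × ℕ)) → Fin (n + 1))
    (fun T c => ⟨T.entry c, Nat.lt_succ_of_le ((T.isSkewSYT.apply_le_card c).trans_eq T.card_shape)⟩)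
    fun T T' h => ?_
  -- the filling vanishes off the shape and determines it
  have hentry : T.entry = T'.entry := funext fun c => by
    by_cases hc : c ∈ range n ×ˢ range n
    · exact congrArg Fin.val (congrFun h ⟨c, hc⟩)
    · have hbox (S : StdTableau n) : c ∉ S.shape := fun hcS =>
        hc (S.card_shape ▸ mem_range_card_product hcS)
      rw [T.isSkewSYT.apply_eq_zero (hbox T), T'.isSkewSYT.apply_eq_zero (hbox T')]
  refine StdTableau.ext (YoungDiagram.ext (Finset.ext fun c => ?_)) hentry
  rw [mem_cells, mem_cells, ← T.isSkewSYT.apply_ne_zero_iff, ← T'.isSkewSYT.apply_ne_zero_iff,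
    hentry]

noncomputable instance (n : ℕ) : Fintype (StdTableau n) :=
  Fintype.ofFinite _

/-- Removing the cell holding the largest entry. -/
def popEquiv (n : ℕ) (P : YoungDiagram → Prop) :
    {T : StdTableau (n + 1) // P T.shape} ≃ Σ T : StdTableau n, {ν // T.shape ⋖ ν ∧ P ν} where
  toFun T :=
    have hn : n ≤ T.1.shape.card := by rw [T.1.card_shape]; omega
    ⟨⟨T.1.shape.sublevel T.1.entry T.1.isSkewSYT.monotoneOn n,
        fun c => if T.1.entry c ≤ n then T.1.entry c else 0,
        T.1.isSkewSYT.card_sublevel hn, T.1.isSkewSYT.sublevel hn⟩,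
      ⟨T.1.shape, covBy_of_le_of_card_eq (sublevel_le _ _ T.1.isSkewSYT.monotoneOn n)
        (by rw [T.1.isSkewSYT.card_sublevel hn, T.1.card_shape]), T.2⟩⟩
  invFun T :=
    ⟨⟨T.2.1, fun c => if c ∈ T.1.shape then T.1.entry c else if c ∈ T.2.1 then T.2.1.card else 0,
        by rw [(covBy_iff_le_and_card_eq.1 T.2.2.1).2, T.1.card_shape],
        T.1.isSkewSYT.extend_of_covBy T.2.2.1⟩,
      T.2.2.2⟩
  left_inv T := by
    obtain ⟨⟨ν, f, hcard, hf⟩, hP⟩ := T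
    refine Subtype.ext (StdTableau.ext rfl (funext fun c => ?_))
    by_cases hc : c ∈ ν
    · have := hf.apply_le_card c
      by_cases hfc : f c ≤ n
      · simp [mem_sublevel, hc, hfc]
      · simp [mem_sublevel, hc, hfc]
        omega
    · simp [mem_sublevel, hc, hf.apply_eq_zero hc]
  right_inv T := by
    obtain ⟨⟨π, g, hcard, hg⟩, ν, hπν, hP⟩ := T
    have hνcard : ν.card = n + 1 := by rw [(covBy_iff_le_and_card_eq.1 hπν).2, hcard]
    have hle := hg.apply_le_card
    refine Sigma.subtype_ext (StdTableau.ext ?_ (funext fun c => ?_)) rfl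
    · refine YoungDiagram.ext (Finset.ext fun c => ?_)
      rw [mem_cells, mem_cells, mem_sublevel]
      by_cases hc : c ∈ π
      · simp [hc, hπν.le hc, hcard ▸ hle c]
      · simp +contextual [hc, hνcard]
    · by_cases hc : c ∈ π
      · simp [hc, hcard ▸ hle c]
      · by_cases hcν : c ∈ ν <;> simp [hc, hcν, hνcard, hg.apply_eq_zero hc]

theorem card_subtype_succ (n : ℕ) (P : YoungDiagram → Prop) :
    Nat.card {T : StdTableau (n + 1) // P T.shape} =
      ∑ T : StdTableau n, Nat.card {ν // T.shape ⋖ ν ∧ P ν} := by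
  have (T : StdTableau n) : Finite {ν // T.shape ⋖ ν ∧ P ν} :=
    finite_of_card_le _ (T.shape.card + 1) fun ν h => (covBy_iff_le_and_card_eq.1 h.1).2.le
  rw [Nat.card_congr (popEquiv n P), Nat.card_sigma]

end StdTableau

instance (lam : YoungDiagram) : Finite {μ // μ ⋖ lam} :=
  finite_of_card_le _ lam.card fun _ h => YoungDiagram.card_mono h.le

noncomputable instance (lam : YoungDiagram) : Fintype {μ // μ ⋖ lam} :=
  Fintype.ofFinite _

noncomputable def stripCount (r : ℕ) (lam : YoungDiagram) : ℕ :=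
  Nat.card {T : StdTableau r // IsHorizontalStrip T.shape lam}

theorem Nat.card_subtype_eq_sum {α : Type*} [Fintype α] (p : α → Prop) [DecidablePred p] :
    Nat.card {x // p x} = ∑ x, if p x then 1 else 0 := by
  rw [Nat.card_eq_fintype_card, Fintype.card_subtype, card_filter]

theorem stripCount_succ (r : ℕ) (lam : YoungDiagram) :
    stripCount (r + 1) lam = stripCount r lam + ∑ μ : {μ // μ ⋖ lam}, stripCount r μ := by
  classical
  have hcov (T : StdTableau r) : Nat.card {μ // μ ⋖ lam ∧ IsHorizontalStrip T.shape μ} =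
      ∑ μ : {μ // μ ⋖ lam}, if IsHorizontalStrip T.shape μ then 1 else 0 := by
    rw [← Nat.card_subtype_eq_sum, Nat.card_congr (Equiv.subtypeSubtypeEquivSubtypeInter _ _)]
  rw [stripCount, StdTableau.card_subtype_succ r (IsHorizontalStrip · lam)]
  simp only [card_covBy_isHorizontalStrip, hcov, sum_add_distrib, stripCount, Nat.card_subtype_eq_sum]
  exact congrArg _ sum_comm

theorem stripCount_eq_zero_of_lt {r : ℕ} {lam : YoungDiagram} (h : r < lam.card) :
    stripCount r lam = 0 :=
  have : IsEmpty {T : StdTableau r // IsHorizontalStrip T.shape lam} :=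
    ⟨fun T => absurd ((YoungDiagram.card_mono T.2.1).trans_eq T.1.card_shape) (not_le.2 h)⟩
  Nat.card_of_isEmpty

theorem stripCount_card (lam : YoungDiagram) :
    stripCount lam.card lam = Nat.card {f // IsSkewSYT lam ⊥ f} := by
  refine (Nat.card_eq_of_bijective (fun f => ⟨⟨lam, f.1, rfl, f.2⟩, isHorizontalStrip_refl lam⟩)
    ⟨fun f f' h => Subtype.ext (congrArg (fun T => T.1.entry) h), ?_⟩).symm
  rintro ⟨⟨ν, f, hcard, hf⟩, hs⟩
  obtain rfl : lam = ν := eq_of_le_of_card_le hs.1 hcard.le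
  exact ⟨⟨f, hf⟩, rfl⟩

theorem card_eq_of_covBy {μ lam : YoungDiagram} (h : μ ⋖ lam) : μ.card = lam.card - 1 := by
  rw [(covBy_iff_le_and_card_eq.1 h).2, Nat.add_sub_cancel]

/-- The branching rule, as the case `r + 1 = |lam|` of `stripCount_succ`. -/
theorem sum_card_isSkewSYT_covBy {lam : YoungDiagram} (h : lam.card ≠ 0) :
    ∑ μ : {μ // μ ⋖ lam}, Nat.card {f // IsSkewSYT μ.1 ⊥ f} = Nat.card {f // IsSkewSYT lam ⊥ f} := by
  obtain ⟨k, hk⟩ : ∃ k, lam.card = k + 1 := ⟨lam.card - 1, by omega⟩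
  rw [← stripCount_card, hk, stripCount_succ, stripCount_eq_zero_of_lt (by omega), zero_add]
  refine sum_congr rfl fun μ _ => ?_
  rw [← stripCount_card, card_eq_of_covBy μ.2, hk, Nat.add_sub_cancel]

theorem stripCount_eq (r : ℕ) (lam : YoungDiagram) :
    stripCount r lam = r.choose lam.card * Nat.card {f // IsSkewSYT lam ⊥ f} := by
  induction r generalizing lam with
  | zero =>
    rcases Nat.eq_zero_or_pos lam.card with h | h
    · rw [← h, stripCount_card, Nat.choose_self, one_mul]
    · rw [stripCount_eq_zero_of_lt h, Nat.choose_eq_zero_of_lt h, zero_mul]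
  | succ r ih =>
    have hsum : ∑ μ : {μ // μ ⋖ lam}, stripCount r μ =
        r.choose (lam.card - 1) * ∑ μ : {μ // μ ⋖ lam}, Nat.card {f // IsSkewSYT μ.1 ⊥ f} := by
      rw [mul_sum]
      exact sum_congr rfl fun μ _ => by rw [ih, card_eq_of_covBy μ.2]
    rw [stripCount_succ, ih, hsum]
    rcases Nat.eq_zero_or_pos lam.card with h | h
    · have : IsEmpty {μ // μ ⋖ lam} := ⟨fun μ => by have := YoungDiagram.card_strictMono μ.2.lt; omega⟩
      simp [h]
    · obtain ⟨k, hk⟩ : ∃ k, lam.card = k + 1 := ⟨lam.card - 1, by omega⟩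
      rw [sum_card_isSkewSYT_covBy h.ne', hk, Nat.choose_succ_succ', Nat.add_sub_cancel]
      ring

theorem isHorizontalStrip_iff_of_rowLen {Λ lam ν : YoungDiagram} {r : ℕ}
    (hΛ₀ : Λ.rowLen 0 = r + lam.rowLen 0 - lam.card) (hΛ : ∀ i, Λ.rowLen (i + 1) = lam.rowLen i)
    (hν : ν.card = r) : IsHorizontalStrip Λ ν ↔ IsHorizontalStrip ν lam := by
  simp only [isHorizontalStrip_iff_rowLen, hΛ]
  refine ⟨fun ⟨h₁, h₂⟩ => ⟨h₂, fun i => (h₁ (i + 1)).trans_eq (hΛ i)⟩, fun ⟨h₁, h₂⟩ => ⟨?_, h₁⟩⟩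
  rintro (_ | i)
  · -- the other rows of `ν` hold at least `|lam| - lam.rowLen 0` cells
    have hlam : lam.card ≤ r := hν ▸ YoungDiagram.card_mono (le_iff_rowLen_le.2 h₁)
    have hνsum := ν.card_eq_sum_rowLen (K := r + 1) (by omega)
    have hlamsum := lam.card_eq_sum_rowLen (K := r + 1) (by omega)
    rw [sum_range_succ'] at hνsum hlamsum
    have := sum_le_sum fun i (_ : i ∈ range r) => h₁ (i + 1)
    rw [hΛ₀]
    omega
  · rw [hΛ]
    exact h₂ i

theorem sum_syt_horizontal_strips_general (lam Λ : YoungDiagram) (r : ℕ)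
    (hΛ : Λ.rowLens = (r + lam.rowLen 0 - lam.card) :: lam.rowLens) :
    Nat.card {p : YoungDiagram × (ℕ × ℕ → ℕ) //
        p.1.card = r ∧ IsHorizontalStrip Λ p.1 ∧ IsSkewSYT p.1 ⊥ p.2} =
      Nat.choose r lam.card * Nat.card {f : ℕ × ℕ → ℕ // IsSkewSYT lam ⊥ f} := by
  have hΛ₀ : Λ.rowLen 0 = r + lam.rowLen 0 - lam.card := by
    rw [rowLen_eq_getD_rowLens, hΛ, List.getD_cons_zero]
  have hΛsucc (i : ℕ) : Λ.rowLen (i + 1) = lam.rowLen i := by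
    rw [rowLen_eq_getD_rowLens, hΛ, List.getD_cons_succ, ← rowLen_eq_getD_rowLens]
  have hstrip {ν : YoungDiagram} (hν : ν.card = r) := isHorizontalStrip_iff_of_rowLen hΛ₀ hΛsucc hν
  rw [← stripCount_eq]
  exact Nat.card_congr
    { toFun p := ⟨⟨p.1.1, p.1.2, p.2.1, p.2.2.2⟩, (hstrip p.2.1).1 p.2.2.1⟩
      invFun T := ⟨(T.1.shape, T.1.entry), T.1.card_shape, (hstrip T.1.card_shape).2 T.2,
        T.1.isSkewSYT⟩
      left_inv _ := rfl
      right_inv _ := rfl }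

/-- For a partition `λ` and `r ≥ |λ| + λ₁`, letting `Λ = λ^(r+λ₁) = (r + λ₁ - |λ|, λ)`,
the number of pairs `(ν, τ)` of a partition `ν` of size `r` such that `Λ/ν` is a
horizontal strip together with a standard Young tableau `τ` of shape `ν` equals
`C(r, |λ|) · |SYT(λ)|`. -/
theorem sum_syt_horizontal_strips (lam Λ : YoungDiagram) (r : ℕ)
    (hr : lam.card + lam.rowLen 0 ≤ r)
    (hΛ : Λ.rowLens = (r + lam.rowLen 0 - lam.card) :: lam.rowLens) :
    Nat.card {p : YoungDiagram × (ℕ × ℕ → ℕ) //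
        p.1.card = r ∧ IsHorizontalStrip Λ p.1 ∧ IsSkewSYT p.1 ⊥ p.2} =
      Nat.choose r lam.card * Nat.card {f : ℕ × ℕ → ℕ // IsSkewSYT lam ⊥ f} :=
  sum_syt_horizontal_strips_general lam Λ r hΛ
end

section
/- Let λ and μ be partitions, and let r ≥ |λ| + λ₁ and m ≥ max(|μ| + μ₁, |μ| + λ₁). If μ ⊆ λ, then the number of standard Young tableaux of the skew shape λ^{(r+m)}/μ^{(m)} equals C(r, |λ/μ|)·|SYT(λ/μ)|, where λ^{(n)} = (n - |λ|, λ). If μ ⊄ λ then μ^{(m)} ⊄ λ^{(r+m)}. -/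
open Finset

namespace SkewAux

lemma rowLen_getD (ν : YoungDiagram) (i : ℕ) : ν.rowLen i = ν.rowLens.getD i 0 := by
  rcases lt_or_ge i ν.rowLens.length with h | h
  · rw [List.getD_eq_getElem _ _ h, YoungDiagram.get_rowLens]
  · rw [List.getD_eq_default _ _ h]
    rw [YoungDiagram.length_rowLens] at h
    by_contra hne
    have : (i, 0) ∈ ν := YoungDiagram.mem_iff_lt_rowLen.2 (Nat.pos_of_ne_zero hne)
    rw [YoungDiagram.mem_iff_lt_colLen] at this
    omega

lemma mem_cons0 {ν w : YoungDiagram} {L : ℕ} (h : ν.rowLens = L :: w.rowLens) (j : ℕ) :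
    (0, j) ∈ ν ↔ j < L := by
  rw [YoungDiagram.mem_iff_lt_rowLen, rowLen_getD, h]; rfl

lemma mem_consS {ν w : YoungDiagram} {L : ℕ} (h : ν.rowLens = L :: w.rowLens) (i j : ℕ) :
    (i + 1, j) ∈ ν ↔ (i, j) ∈ w := by
  rw [YoungDiagram.mem_iff_lt_rowLen, rowLen_getD, h, List.getD_cons_succ, ← rowLen_getD,
    ← YoungDiagram.mem_iff_lt_rowLen]

lemma card_cons {ν w : YoungDiagram} {L : ℕ} (h : ν.rowLens = L :: w.rowLens) :
    ν.card = L + w.card := by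
  classical
  have hinj : Function.Injective (fun c : ℕ × ℕ => (c.1 + 1, c.2)) := by
    intro a b hab
    simp only [Prod.mk.injEq] at hab
    exact Prod.ext (by omega) hab.2
  have hcells : ν.cells = ({0} ×ˢ Finset.range L) ∪ w.cells.map ⟨_, hinj⟩ := by
    ext ⟨i, j⟩
    simp only [Finset.mem_union, Finset.mem_product, Finset.mem_singleton, Finset.mem_range,
      Finset.mem_map, Function.Embedding.coeFn_mk, YoungDiagram.mem_cells, Prod.mk.injEq]
    cases i with
    | zero =>
      rw [mem_cons0 h]
      constructor
      · exact fun hj => Or.inl ⟨rfl, hj⟩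
      · rintro (⟨-, hj⟩ | ⟨c, _, hc, -⟩)
        · exact hj
        · omega
    | succ i =>
      rw [mem_consS h]
      constructor
      · exact fun hw => Or.inr ⟨(i, j), hw, rfl, rfl⟩
      · rintro (⟨h0, -⟩ | ⟨⟨a, b⟩, hab, h1, h2⟩)
        · omega
        · have : a = i := by omega
          subst this; subst h2; exact hab
  rw [YoungDiagram.card, hcells, Finset.card_union_of_disjoint, Finset.card_map,
    Finset.card_product, Finset.card_singleton, Finset.card_range, one_mul]
  rw [Finset.disjoint_left]
  rintro ⟨i, j⟩ hij hij'
  simp only [Finset.mem_product, Finset.mem_singleton] at hij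
  simp only [Finset.mem_map, Function.Embedding.coeFn_mk, Prod.mk.injEq] at hij'
  obtain ⟨c, -, hc, -⟩ := hij'
  omega


noncomputable def enum (S : Finset ℕ) (t : ℕ) : ℕ :=
  if h : t - 1 < S.card ∧ 1 ≤ t then S.orderEmbOfFin rfl ⟨t - 1, h.1⟩ else 0

noncomputable def rnk (S : Finset ℕ) (v : ℕ) : ℕ :=
  if h : v ∈ S then ((S.orderIsoOfFin rfl).symm ⟨v, h⟩ : Fin S.card).val + 1 else 0

lemma enum_zero (S : Finset ℕ) : enum S 0 = 0 := by simp [enum]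

lemma enum_mem {S : Finset ℕ} {t : ℕ} (h1 : 1 ≤ t) (h2 : t ≤ S.card) : enum S t ∈ S := by
  rw [enum, dif_pos ⟨by omega, h1⟩]
  exact Finset.orderEmbOfFin_mem S rfl _

lemma enum_lt_enum {S : Finset ℕ} {t₁ t₂ : ℕ} (h1 : 1 ≤ t₁) (h2 : t₂ ≤ S.card) (h : t₁ < t₂) :
    enum S t₁ < enum S t₂ := by
  rw [enum, enum, dif_pos ⟨by omega, h1⟩, dif_pos ⟨by omega, by omega⟩]
  exact (S.orderEmbOfFin rfl).strictMono (by rw [Fin.mk_lt_mk]; omega)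

lemma rnk_mem {S : Finset ℕ} {v : ℕ} (h : v ∈ S) : 1 ≤ rnk S v ∧ rnk S v ≤ S.card := by
  rw [rnk, dif_pos h]
  refine ⟨by omega, ?_⟩
  have := ((S.orderIsoOfFin rfl).symm ⟨v, h⟩).isLt
  omega

lemma rnk_lt_rnk {S : Finset ℕ} {v₁ v₂ : ℕ} (h1 : v₁ ∈ S) (h2 : v₂ ∈ S) (h : v₁ < v₂) :
    rnk S v₁ < rnk S v₂ := by
  rw [rnk, rnk, dif_pos h1, dif_pos h2]
  have : ((S.orderIsoOfFin rfl).symm ⟨v₁, h1⟩) < ((S.orderIsoOfFin rfl).symm ⟨v₂, h2⟩) :=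
    (S.orderIsoOfFin rfl).symm.strictMono (Subtype.mk_lt_mk.2 h)
  rw [Fin.lt_def] at this
  omega

lemma enum_rnk {S : Finset ℕ} {v : ℕ} (h : v ∈ S) : enum S (rnk S v) = v := by
  rw [rnk, dif_pos h]
  set i := (S.orderIsoOfFin rfl).symm ⟨v, h⟩ with hi
  rw [enum, dif_pos ⟨by simpa using i.isLt, Nat.le_add_left 1 _⟩]
  have h2 : (⟨i.val + 1 - 1, by simpa using i.isLt⟩ : Fin S.card) = i := Fin.ext (by simp)
  rw [h2, ← Finset.coe_orderIsoOfFin_apply, hi, OrderIso.apply_symm_apply]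

lemma rnk_enum {S : Finset ℕ} {t : ℕ} (h1 : 1 ≤ t) (h2 : t ≤ S.card) : rnk S (enum S t) = t := by
  rw [enum, dif_pos ⟨by omega, h1⟩, rnk,
    dif_pos (Finset.orderEmbOfFin_mem S rfl ⟨t - 1, by omega⟩)]
  have h3 : (⟨S.orderEmbOfFin rfl ⟨t - 1, by omega⟩,
      Finset.orderEmbOfFin_mem S rfl ⟨t - 1, by omega⟩⟩ : S) =
      S.orderIsoOfFin rfl ⟨t - 1, by omega⟩ :=
    Subtype.ext (Finset.coe_orderIsoOfFin_apply S rfl _).symm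
  rw [h3, OrderIso.symm_apply_apply]
  show t - 1 + 1 = t
  omega

lemma enum_inj {S : Finset ℕ} {t₁ t₂ : ℕ} (h1 : 1 ≤ t₁) (h1' : t₁ ≤ S.card)
    (h2 : 1 ≤ t₂) (h2' : t₂ ≤ S.card) (h : enum S t₁ = enum S t₂) : t₁ = t₂ := by
  rw [← rnk_enum h1 h1', ← rnk_enum h2 h2', h]

lemma enum_eq_of_strictMono {S : Finset ℕ} {k : ℕ} (hk : S.card = k) (e : ℕ → ℕ)
    (hmem : ∀ t, t < k → e t ∈ S)
    (hmono : ∀ t₁ t₂, t₁ < t₂ → t₂ < k → e t₁ < e t₂) :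
    ∀ t, t < k → enum S (t + 1) = e t := by
  subst hk
  have hu : (fun x : Fin S.card => e x.val) = S.orderEmbOfFin rfl :=
    Finset.orderEmbOfFin_unique rfl (fun x => hmem x x.isLt)
      (fun a b hab => hmono a b hab b.isLt)
  intro t ht
  rw [enum, dif_pos ⟨by omega, by omega⟩]
  have h2 := congrFun hu ⟨t + 1 - 1, by omega⟩
  simp only at h2
  rw [← h2]
  norm_num

noncomputable def Sof (lam mu : YoungDiagram) (f : ℕ × ℕ → ℕ) : Finset ℕ :=
  (lam.cells \ mu.cells).image fun c => f (c.1 + 1, c.2)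

noncomputable def gof (lam mu : YoungDiagram) (f : ℕ × ℕ → ℕ) : ℕ × ℕ → ℕ :=
  fun c => if c ∈ lam.cells \ mu.cells then rnk (Sof lam mu f) (f (c.1 + 1, c.2)) else 0

noncomputable def fof (r k0 L : ℕ) (S : Finset ℕ) (g : ℕ × ℕ → ℕ) : ℕ × ℕ → ℕ := fun c =>
  if c.1 = 0 then
    (if k0 ≤ c.2 ∧ c.2 < L then enum (Finset.Icc 1 r \ S) (c.2 - k0 + 1) else 0)
  else enum S (g (c.1 - 1, c.2))

theorem aux (lam mu Λ M : YoungDiagram) (r k0 L d : ℕ)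
    (hml : mu ≤ lam)
    (hd : d = lam.card - mu.card)
    (hΛ0 : ∀ j, ((0, j) ∈ Λ ↔ j < L))
    (hΛs : ∀ i j, ((i + 1, j) ∈ Λ ↔ (i, j) ∈ lam))
    (hM0 : ∀ j, ((0, j) ∈ M ↔ j < k0))
    (hMs : ∀ i j, ((i + 1, j) ∈ M ↔ (i, j) ∈ mu))
    (hlamk0 : ∀ i j, (i, j) ∈ lam → j < k0)
    (hLa : L = k0 + (r - d))
    (hrd : d ≤ r)
    (hMΛ : M ≤ Λ)
    (hcard : Λ.card - M.card = r) :
    Nat.card {f : ℕ × ℕ → ℕ // IsSkewSYT Λ M f} =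
      r.choose d * Nat.card {f : ℕ × ℕ → ℕ // IsSkewSYT lam mu f} := by
  classical
  have hsub : mu.cells ⊆ lam.cells := hml
  have hT0 : ∀ j, ((0, j) ∈ Λ.cells \ M.cells ↔ k0 ≤ j ∧ j < L) := by
    intro j
    simp only [Finset.mem_sdiff, YoungDiagram.mem_cells, hΛ0, hM0]
    omega
  have hTs : ∀ i j, ((i + 1, j) ∈ Λ.cells \ M.cells ↔ (i, j) ∈ lam.cells \ mu.cells) := by
    intro i j
    simp only [Finset.mem_sdiff, YoungDiagram.mem_cells, hΛs, hMs]
  have hdd : (lam.cells \ mu.cells).card = d := by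
    rw [Finset.card_sdiff_of_subset hsub, hd]
  -- values of g on the skew cells
  have hgmemOf : ∀ g : ℕ × ℕ → ℕ,
      Set.BijOn g ↑(lam.cells \ mu.cells) ↑(Finset.Icc 1 (lam.card - mu.card)) →
      ∀ c ∈ lam.cells \ mu.cells, 1 ≤ g c ∧ g c ≤ d := by
    intro g hgbij c hc
    have := hgbij.mapsTo (Finset.mem_coe.2 hc)
    rw [Finset.mem_coe, Finset.mem_Icc] at this
    omega
  -- Sof is a subset of Icc 1 r
  have hSsub : ∀ f : ℕ × ℕ → ℕ, IsSkewSYT Λ M f → Sof lam mu f ⊆ Finset.Icc 1 r := by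
    intro f hf v hv
    obtain ⟨c, hc, rfl⟩ := Finset.mem_image.1 hv
    have hcT : (c.1 + 1, c.2) ∈ Λ.cells \ M.cells := (hTs c.1 c.2).2 (by simpa using hc)
    have h2 := hf.2.2.1.mapsTo (Finset.mem_coe.2 hcT)
    rw [Finset.mem_coe, hcard] at h2
    exact h2
  have hScard : ∀ f : ℕ × ℕ → ℕ, IsSkewSYT Λ M f → (Sof lam mu f).card = d := by
    intro f hf
    rw [Sof, Finset.card_image_of_injOn, hdd]
    intro c₁ h₁ c₂ h₂ heq
    rw [Finset.mem_coe] at h₁ h₂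
    have hpair := hf.2.2.1.injOn
      (Finset.mem_coe.2 ((hTs c₁.1 c₁.2).2 (by simpa using h₁)))
      (Finset.mem_coe.2 ((hTs c₂.1 c₂.2).2 (by simpa using h₂))) heq
    rw [Prod.ext_iff] at hpair
    exact Prod.ext_iff.2 ⟨by omega, hpair.2⟩
  -- values of f on lower cells belong to Sof
  have hvmem : ∀ f : ℕ × ℕ → ℕ, ∀ c ∈ lam.cells \ mu.cells,
      f (c.1 + 1, c.2) ∈ Sof lam mu f :=
    fun f c hc => Finset.mem_image_of_mem _ hc
  -- forward map second component is well-defined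
  have hgof : ∀ f, IsSkewSYT Λ M f → IsSkewSYT lam mu (gof lam mu f) := by
    intro f hf
    have hW := hScard f hf
    obtain ⟨-, hzero, hbij, hrow, hcol⟩ := hf
    rw [hcard] at hbij
    refine ⟨hml, ?_, ⟨?_, ?_, ?_⟩, ?_, ?_⟩
    · intro c hc; simp only [gof, if_neg hc]
    · intro c hc
      rw [Finset.mem_coe] at hc
      simp only [gof, if_pos hc]
      have := rnk_mem (hvmem f c hc)
      rw [Finset.mem_coe, Finset.mem_Icc]
      omega
    · intro c₁ h₁ c₂ h₂ heq
      rw [Finset.mem_coe] at h₁ h₂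
      simp only [gof, if_pos h₁, if_pos h₂] at heq
      have hval : f (c₁.1 + 1, c₁.2) = f (c₂.1 + 1, c₂.2) := by
        have := congrArg (enum (Sof lam mu f)) heq
        rwa [enum_rnk (hvmem f c₁ h₁), enum_rnk (hvmem f c₂ h₂)] at this
      have hpair := hbij.injOn
        (Finset.mem_coe.2 ((hTs c₁.1 c₁.2).2 (by simpa using h₁)))
        (Finset.mem_coe.2 ((hTs c₂.1 c₂.2).2 (by simpa using h₂))) hval
      rw [Prod.ext_iff] at hpair
      exact Prod.ext_iff.2 ⟨by omega, hpair.2⟩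
    · intro t ht
      rw [Finset.mem_coe, Finset.mem_Icc] at ht
      have htW : 1 ≤ t ∧ t ≤ (Sof lam mu f).card := by omega
      have hvS := enum_mem htW.1 htW.2
      obtain ⟨c, hcB, hfc⟩ := Finset.mem_image.1 hvS
      refine ⟨c, Finset.mem_coe.2 hcB, ?_⟩
      simp only [gof, if_pos hcB]
      rw [hfc, rnk_enum htW.1 htW.2]
    · intro i j₁ j₂ h₁ h₂ hj
      simp only [gof, if_pos h₁, if_pos h₂]
      exact rnk_lt_rnk (hvmem f _ h₁) (hvmem f _ h₂)
        (hrow (i + 1) j₁ j₂ ((hTs i j₁).2 h₁) ((hTs i j₂).2 h₂) hj)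
    · intro i₁ i₂ j h₁ h₂ hi
      simp only [gof, if_pos h₁, if_pos h₂]
      exact rnk_lt_rnk (hvmem f _ h₁) (hvmem f _ h₂)
        (hcol (i₁ + 1) (i₂ + 1) j ((hTs i₁ j).2 h₁) ((hTs i₂ j).2 h₂) (by omega))
  -- backward map is well-defined
  have hfof : ∀ (S : Finset ℕ) (g : ℕ × ℕ → ℕ), S ⊆ Finset.Icc 1 r → S.card = d →
      IsSkewSYT lam mu g → IsSkewSYT Λ M (fof r k0 L S g) := by
    intro S g hS1 hS2 hg
    obtain ⟨-, hgzero, hgbij, hgrow, hgcol⟩ := hg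
    have hCcard : (Finset.Icc 1 r \ S).card = r - d := by
      rw [Finset.card_sdiff_of_subset hS1, Nat.card_Icc, hS2]
      omega
    have hgmem := hgmemOf g hgbij
    refine ⟨hMΛ, ?_, ?_, ?_, ?_⟩
    · rintro ⟨i, j⟩ hc
      cases i with
      | zero =>
        show (if (0 : ℕ) = 0 then _ else _) = 0
        rw [if_pos rfl, if_neg]
        intro hcon
        exact hc ((hT0 j).2 hcon)
      | succ i =>
        show enum S (g (i + 1 - 1, j)) = 0
        have hB : (i, j) ∉ lam.cells \ mu.cells := fun h => hc ((hTs i j).2 h)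
        rw [Nat.add_sub_cancel, hgzero _ hB, enum_zero]
    · rw [hcard]
      refine ⟨?_, ?_, ?_⟩
      · rintro ⟨i, j⟩ hc
        rw [Finset.mem_coe] at hc
        cases i with
        | zero =>
          obtain ⟨h1, h2⟩ := (hT0 j).1 hc
          show (if (0 : ℕ) = 0 then _ else _) ∈ _
          rw [if_pos rfl, if_pos ⟨h1, h2⟩]
          have hmem : enum (Finset.Icc 1 r \ S) (j - k0 + 1) ∈ Finset.Icc 1 r \ S :=
            enum_mem (by omega) (by rw [hCcard]; omega)
          exact Finset.mem_coe.2 (Finset.mem_sdiff.1 hmem).1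
        | succ i =>
          have hcB := (hTs i j).1 hc
          show enum S (g (i + 1 - 1, j)) ∈ _
          rw [Nat.add_sub_cancel]
          have := hgmem _ hcB
          exact Finset.mem_coe.2 (hS1 (enum_mem (by omega) (by omega)))
      · rintro ⟨i₁, j₁⟩ h₁ ⟨i₂, j₂⟩ h₂ heq
        rw [Finset.mem_coe] at h₁ h₂
        have evalTop : ∀ j, k0 ≤ j → j < L →
            fof r k0 L S g (0, j) = enum (Finset.Icc 1 r \ S) (j - k0 + 1) := by
          intro j ha hb
          show (if (0 : ℕ) = 0 then _ else _) = _
          rw [if_pos rfl, if_pos ⟨ha, hb⟩]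
        have evalBot : ∀ i j, fof r k0 L S g (i + 1, j) = enum S (g (i, j)) := by
          intro i j
          show enum S (g (i + 1 - 1, j)) = _
          rw [Nat.add_sub_cancel]
        cases i₁ with
        | zero =>
          obtain ⟨ha1, ha2⟩ := (hT0 j₁).1 h₁
          cases i₂ with
          | zero =>
            obtain ⟨hb1, hb2⟩ := (hT0 j₂).1 h₂
            rw [evalTop j₁ ha1 ha2, evalTop j₂ hb1 hb2] at heq
            have := enum_inj (S := Finset.Icc 1 r \ S) (by omega) (by rw [hCcard]; omega)
              (by omega) (by rw [hCcard]; omega) heq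
            have : j₁ = j₂ := by omega
            rw [this]
          | succ i₂ =>
            exfalso
            have hcB := (hTs i₂ j₂).1 h₂
            rw [evalTop j₁ ha1 ha2, evalBot i₂ j₂] at heq
            have hL : enum (Finset.Icc 1 r \ S) (j₁ - k0 + 1) ∈ Finset.Icc 1 r \ S :=
              enum_mem (by omega) (by rw [hCcard]; omega)
            have hm := hgmem _ hcB
            have hR : enum S (g (i₂, j₂)) ∈ S := enum_mem hm.1 (by omega)
            rw [heq] at hL
            exact (Finset.mem_sdiff.1 hL).2 hR
        | succ i₁ =>
          have hcB₁ := (hTs i₁ j₁).1 h₁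
          cases i₂ with
          | zero =>
            exfalso
            obtain ⟨hb1, hb2⟩ := (hT0 j₂).1 h₂
            rw [evalTop j₂ hb1 hb2, evalBot i₁ j₁] at heq
            have hL : enum (Finset.Icc 1 r \ S) (j₂ - k0 + 1) ∈ Finset.Icc 1 r \ S :=
              enum_mem (by omega) (by rw [hCcard]; omega)
            have hm := hgmem _ hcB₁
            have hR : enum S (g (i₁, j₁)) ∈ S := enum_mem hm.1 (by omega)
            rw [← heq] at hL
            exact (Finset.mem_sdiff.1 hL).2 hR
          | succ i₂ =>
            have hcB₂ := (hTs i₂ j₂).1 h₂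
            rw [evalBot i₁ j₁, evalBot i₂ j₂] at heq
            have hm₁ := hgmem _ hcB₁
            have hm₂ := hgmem _ hcB₂
            have hgeq : g (i₁, j₁) = g (i₂, j₂) :=
              enum_inj hm₁.1 (by omega) hm₂.1 (by omega) heq
            have hpair := hgbij.injOn (Finset.mem_coe.2 hcB₁) (Finset.mem_coe.2 hcB₂) hgeq
            rw [Prod.ext_iff] at hpair
            obtain ⟨hp1, hp2⟩ := hpair
            simp only at hp1 hp2
            rw [Prod.ext_iff]
            exact ⟨by simp [hp1], by simpa using hp2⟩
      · intro v hv
        rw [Finset.mem_coe, Finset.mem_Icc] at hv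
        by_cases hvS : v ∈ S
        · have ht := rnk_mem hvS
          have htIcc : rnk S v ∈ Finset.Icc 1 (lam.card - mu.card) := by
            rw [Finset.mem_Icc]; omega
          obtain ⟨c, hcB, hgc⟩ := hgbij.surjOn (Finset.mem_coe.2 htIcc)
          rw [Finset.mem_coe] at hcB
          refine ⟨(c.1 + 1, c.2), ?_, ?_⟩
          · exact Finset.mem_coe.2 ((hTs c.1 c.2).2 (by simpa using hcB))
          · show enum S (g (c.1 + 1 - 1, c.2)) = v
            rw [Nat.add_sub_cancel]
            have : g (c.1, c.2) = rnk S v := by simpa using hgc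
            rw [this, enum_rnk hvS]
        · have hvC : v ∈ Finset.Icc 1 r \ S :=
            Finset.mem_sdiff.2 ⟨Finset.mem_Icc.2 ⟨hv.1, hv.2⟩, hvS⟩
          have ht := rnk_mem hvC
          rw [hCcard] at ht
          refine ⟨(0, k0 + rnk (Finset.Icc 1 r \ S) v - 1), ?_, ?_⟩
          · rw [Finset.mem_coe]
            exact (hT0 _).2 ⟨by omega, by omega⟩
          · show (if (0 : ℕ) = 0 then _ else _) = v
            rw [if_pos rfl, if_pos ⟨by omega, by omega⟩]
            have harg : k0 + rnk (Finset.Icc 1 r \ S) v - 1 - k0 + 1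
                = rnk (Finset.Icc 1 r \ S) v := by omega
            rw [harg, enum_rnk hvC]
    · intro i j₁ j₂ h₁ h₂ hj
      cases i with
      | zero =>
        obtain ⟨ha1, ha2⟩ := (hT0 j₁).1 h₁
        obtain ⟨hb1, hb2⟩ := (hT0 j₂).1 h₂
        show (if (0:ℕ) = 0 then _ else _) < (if (0:ℕ) = 0 then _ else _)
        rw [if_pos rfl, if_pos rfl, if_pos ⟨ha1, ha2⟩, if_pos ⟨hb1, hb2⟩]
        have hCcard : (Finset.Icc 1 r \ S).card = r - d := by
          rw [Finset.card_sdiff_of_subset hS1, Nat.card_Icc, hS2]; omega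
        exact enum_lt_enum (by omega) (by rw [hCcard]; omega) (by omega)
      | succ i =>
        have hc₁ := (hTs i j₁).1 h₁
        have hc₂ := (hTs i j₂).1 h₂
        show enum S (g (i + 1 - 1, j₁)) < enum S (g (i + 1 - 1, j₂))
        rw [Nat.add_sub_cancel]
        have hm₁ := hgmem _ hc₁
        have hm₂ := hgmem _ hc₂
        exact enum_lt_enum hm₁.1 (by omega) (hgrow i j₁ j₂ hc₁ hc₂ hj)
    · intro i₁ i₂ j h₁ h₂ hi
      cases i₂ with
      | zero => omega
      | succ i₂ =>
        have hc₂ := (hTs i₂ j).1 h₂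
        cases i₁ with
        | zero =>
          exfalso
          have hk := ((hT0 j).1 h₁).1
          have hjlt := hlamk0 i₂ j ((YoungDiagram.mem_cells _).1 (Finset.mem_sdiff.1 hc₂).1)
          omega
        | succ i₁ =>
          have hc₁ := (hTs i₁ j).1 h₁
          show enum S (g (i₁ + 1 - 1, j)) < enum S (g (i₂ + 1 - 1, j))
          rw [Nat.add_sub_cancel, Nat.add_sub_cancel]
          have hm₁ := hgmem _ hc₁
          have hm₂ := hgmem _ hc₂
          exact enum_lt_enum hm₁.1 (by omega) (hgcol i₁ i₂ j hc₁ hc₂ (by omega))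
  -- left inverse
  have hleft : ∀ f, IsSkewSYT Λ M f → fof r k0 L (Sof lam mu f) (gof lam mu f) = f := by
    intro f hf
    have hW := hScard f hf
    have hWsub := hSsub f hf
    have hCcard : (Finset.Icc 1 r \ Sof lam mu f).card = r - d := by
      rw [Finset.card_sdiff_of_subset hWsub, Nat.card_Icc, hW]; omega
    obtain ⟨-, hzero, hbij, hrow, hcol⟩ := hf
    rw [hcard] at hbij
    funext c
    obtain ⟨i, j⟩ := c
    cases i with
    | zero =>
      show (if (0:ℕ) = 0 then _ else _) = f (0, j)
      rw [if_pos rfl]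
      by_cases hj : k0 ≤ j ∧ j < L
      · rw [if_pos hj]
        have key := enum_eq_of_strictMono (S := Finset.Icc 1 r \ Sof lam mu f) hCcard
          (fun t => f (0, k0 + t)) ?_ ?_ (j - k0) (by omega)
        · rw [key]
          show f (0, k0 + (j - k0)) = f (0, j)
          have : k0 + (j - k0) = j := by omega
          rw [this]
        · intro t htlt
          have hmemT : (0, k0 + t) ∈ Λ.cells \ M.cells :=
            (hT0 _).2 ⟨by omega, by omega⟩
          have hIcc : f (0, k0 + t) ∈ Finset.Icc 1 r := by
            have := hbij.mapsTo (Finset.mem_coe.2 hmemT)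
            rwa [Finset.mem_coe] at this
          rw [Finset.mem_sdiff]
          refine ⟨hIcc, ?_⟩
          intro hcon
          obtain ⟨c, hcB, hfc⟩ := Finset.mem_image.1 hcon
          have := hbij.injOn
            (Finset.mem_coe.2 ((hTs c.1 c.2).2 (by simpa using hcB)))
            (Finset.mem_coe.2 hmemT) hfc
          rw [Prod.ext_iff] at this
          omega
        · intro t₁ t₂ hlt hlt2
          exact hrow 0 (k0 + t₁) (k0 + t₂) ((hT0 _).2 ⟨by omega, by omega⟩)
            ((hT0 _).2 ⟨by omega, by omega⟩) (by omega)
      · rw [if_neg hj]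
        exact (hzero (0, j) (fun hc => hj ((hT0 j).1 hc))).symm
    | succ i =>
      show enum (Sof lam mu f) (gof lam mu f (i + 1 - 1, j)) = f (i + 1, j)
      rw [Nat.add_sub_cancel]
      by_cases hB : (i, j) ∈ lam.cells \ mu.cells
      · simp only [gof, if_pos hB]
        exact enum_rnk (hvmem f (i, j) hB)
      · simp only [gof, if_neg hB, enum_zero]
        exact (hzero (i + 1, j) (fun hc => hB ((hTs i j).1 hc))).symm
  -- right inverse, first component
  have hrightS : ∀ (S : Finset ℕ) (g : ℕ × ℕ → ℕ), S ⊆ Finset.Icc 1 r → S.card = d →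
      IsSkewSYT lam mu g → Sof lam mu (fof r k0 L S g) = S := by
    intro S g hS1 hS2 hg
    obtain ⟨-, hgzero, hgbij, -, -⟩ := hg
    have hgmem := hgmemOf g hgbij
    have evalBot : ∀ i j, fof r k0 L S g (i + 1, j) = enum S (g (i, j)) := by
      intro i j
      show enum S (g (i + 1 - 1, j)) = _
      rw [Nat.add_sub_cancel]
    ext v
    simp only [Sof, Finset.mem_image]
    constructor
    · rintro ⟨c, hc, rfl⟩
      rw [evalBot c.1 c.2]
      have hm := hgmem _ (by simpa using hc)
      have : g (c.1, c.2) = g c := by simp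
      rw [this]
      exact enum_mem hm.1 (by omega)
    · intro hv
      have ht := rnk_mem hv
      have htIcc : rnk S v ∈ Finset.Icc 1 (lam.card - mu.card) := by
        rw [Finset.mem_Icc]; omega
      obtain ⟨c, hcB, hgc⟩ := hgbij.surjOn (Finset.mem_coe.2 htIcc)
      rw [Finset.mem_coe] at hcB
      refine ⟨c, hcB, ?_⟩
      rw [evalBot c.1 c.2]
      have : g (c.1, c.2) = rnk S v := by simpa using hgc
      rw [this, enum_rnk hv]
  -- right inverse, second component
  have hrightg : ∀ (S : Finset ℕ) (g : ℕ × ℕ → ℕ), S ⊆ Finset.Icc 1 r → S.card = d →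
      IsSkewSYT lam mu g → gof lam mu (fof r k0 L S g) = g := by
    intro S g hS1 hS2 hg
    have hSof := hrightS S g hS1 hS2 hg
    obtain ⟨-, hgzero, hgbij, -, -⟩ := hg
    have hgmem := hgmemOf g hgbij
    funext c
    obtain ⟨i, j⟩ := c
    by_cases hB : (i, j) ∈ lam.cells \ mu.cells
    · simp only [gof, if_pos hB, hSof]
      have evalBot : fof r k0 L S g (i + 1, j) = enum S (g (i, j)) := by
        show enum S (g (i + 1 - 1, j)) = _
        rw [Nat.add_sub_cancel]
      rw [evalBot]
      have hm := hgmem _ hB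
      exact rnk_enum hm.1 (by omega)
    · simp only [gof, if_neg hB]
      exact (hgzero (i, j) hB).symm
  -- assemble
  have key : Nat.card {f : ℕ × ℕ → ℕ // IsSkewSYT Λ M f} =
      Nat.card ({S : Finset ℕ // S ⊆ Finset.Icc 1 r ∧ S.card = d} ×
        {g : ℕ × ℕ → ℕ // IsSkewSYT lam mu g}) := by
    apply Nat.card_congr
    exact {
      toFun := fun f => (⟨Sof lam mu f.1, hSsub f.1 f.2, hScard f.1 f.2⟩,
        ⟨gof lam mu f.1, hgof f.1 f.2⟩)
      invFun := fun p => ⟨fof r k0 L p.1.1 p.2.1, hfof p.1.1 p.2.1 p.1.2.1 p.1.2.2 p.2.2⟩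
      left_inv := fun f => Subtype.ext (hleft f.1 f.2)
      right_inv := fun p => by
        obtain ⟨⟨S, hS1, hS2⟩, ⟨g, hg⟩⟩ := p
        exact Prod.ext_iff.2 ⟨Subtype.ext (hrightS S g hS1 hS2 hg),
          Subtype.ext (hrightg S g hS1 hS2 hg)⟩ }
  rw [key, Nat.card_prod]
  congr 1
  rw [Nat.card_congr (Equiv.subtypeEquivRight
    (q := fun S : Finset ℕ => S ∈ (Finset.Icc 1 r).powersetCard d)
    (fun S => (Finset.mem_powersetCard).symm))]
  rw [Nat.card_eq_finsetCard, Finset.card_powersetCard, Nat.card_Icc]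
  simp

end SkewAux

/-- Let `λ, μ` be partitions, `r ≥ |λ| + λ₁` and `m ≥ max(|μ| + μ₁, |μ| + λ₁)`, and let
`Λ = λ^(r+m) = (r + m - |λ|, λ)` and `M = μ^(m) = (m - |μ|, μ)`. If `μ ⊆ λ` then the
number of standard Young tableaux of the skew shape `Λ / M` equals
`C(r, |λ/μ|) · |SYT(λ/μ)|`; if `μ ⊄ λ` then `M ⊄ Λ`. -/
theorem skew_syt_count_stable (lam mu Λ M : YoungDiagram) (r m : ℕ)
    (hr : lam.card + lam.rowLen 0 ≤ r)
    (hm : max (mu.card + mu.rowLen 0) (mu.card + lam.rowLen 0) ≤ m)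
    (hΛ : Λ.rowLens = (r + m - lam.card) :: lam.rowLens)
    (hM : M.rowLens = (m - mu.card) :: mu.rowLens) :
    (mu ≤ lam →
      Nat.card {f : ℕ × ℕ → ℕ // IsSkewSYT Λ M f} =
        Nat.choose r (lam.card - mu.card) *
          Nat.card {f : ℕ × ℕ → ℕ // IsSkewSYT lam mu f}) ∧
    (¬ mu ≤ lam → ¬ M ≤ Λ) := by
  obtain ⟨hm1, hm2⟩ := max_le_iff.1 hm
  constructor
  · intro hml
    have hmuc : mu.card ≤ lam.card := Finset.card_le_card hml
    apply SkewAux.aux lam mu Λ M r (m - mu.card) (r + m - lam.card) (lam.card - mu.card)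
      hml rfl (SkewAux.mem_cons0 hΛ) (SkewAux.mem_consS hΛ)
      (SkewAux.mem_cons0 hM) (SkewAux.mem_consS hM)
    · -- hlamk0
      intro i j hij
      have h1 := YoungDiagram.mem_iff_lt_rowLen.1 hij
      have h2 := lam.rowLen_anti 0 i (Nat.zero_le i)
      omega
    · -- hLa
      omega
    · -- hrd
      omega
    · -- M ≤ Λ
      intro c hc
      obtain ⟨i, j⟩ := c
      cases i with
      | zero =>
        have h1 := (SkewAux.mem_cons0 hM j).1 hc
        exact (SkewAux.mem_cons0 hΛ j).2 (by omega)
      | succ i =>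
        have h1 := (SkewAux.mem_consS hM i j).1 hc
        exact (SkewAux.mem_consS hΛ i j).2 (hml h1)
    · -- card
      rw [SkewAux.card_cons hΛ, SkewAux.card_cons hM]
      omega
  · intro hml hMΛ
    apply hml
    intro c hc
    obtain ⟨i, j⟩ := c
    have h1 : (i + 1, j) ∈ M := (SkewAux.mem_consS hM i j).2 hc
    exact (SkewAux.mem_consS hΛ i j).1 (hMΛ h1)
end

section
/- Let λ be a partition and let SYT_∞(λ) be the set of bijective fillings of the infinite diagram λ^{(∞)} (the union of the diagrams λ^{(n)} = (n - |λ|, λ) over n ≥ |λ| + λ₁) by positive integers, increasing along rows and columns. Define inv(τ) as the number of pairs of boxes (□₁, □₂) such that the column-standard filling orders them one way and τ orders them the other way. Then for each k ≥ 0, only finitely many τ ∈ SYT_∞(λ) satisfy inv(τ) ≤ k. -/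
/-!
A bound `k` on the inversions lets each label rise by at most `k`: the cells that `τ` puts
before `c` but `τ₀` puts after `c` form inversions `(c, d)`. Column-standardness forces `τ₀` to
label the part of the first row beyond `λ₁` by consecutive integers `N, N + 1, …`, and `τ`
increases there as well. Hence for `m + 1 ≥ N + k` every cell with `τ₀`-label `≤ m` has
`τ`-label `≤ m`; both sets have `m` elements, so they coincide. Thus `τ = τ₀` on all labels
`≥ N + k`, and on the finitely many remaining cells `τ` is bounded by `N + 2k`.
-/

/-- The infinite Young diagram `λ^(∞)`: an infinite first row (row `0`) together with a
copy of the diagram of `λ` shifted down by one row. -/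
def InfDiag (lam : YoungDiagram) : Set (ℕ × ℕ) :=
  {c : ℕ × ℕ | c.1 = 0} ∪ {c : ℕ × ℕ | ∃ i j : ℕ, (i, j) ∈ lam.cells ∧ c = (i + 1, j)}

/-- A standard Young tableau of the infinite shape `λ^(∞)`: a bijective filling of the
cells of `λ^(∞)` by the positive integers, strictly increasing along rows and columns,
and zero outside the diagram. -/
def IsInfSYT (lam : YoungDiagram) (τ : ℕ × ℕ → ℕ) : Prop :=
  (∀ c : ℕ × ℕ, c ∉ InfDiag lam → τ c = 0) ∧
  Set.BijOn τ (InfDiag lam) {n : ℕ | 1 ≤ n} ∧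
  (∀ i j₁ j₂ : ℕ, (i, j₁) ∈ InfDiag lam → (i, j₂) ∈ InfDiag lam →
    j₁ < j₂ → τ (i, j₁) < τ (i, j₂)) ∧
  (∀ i₁ i₂ j : ℕ, (i₁, j) ∈ InfDiag lam → (i₂, j) ∈ InfDiag lam →
    i₁ < i₂ → τ (i₁, j) < τ (i₂, j))

/-- The set of inversion pairs of `τ` relative to the column-standard filling `τ₀`:
pairs of cells of the diagram ordered one way by `τ₀` and the other way by `τ`. -/
def InvSet (lam : YoungDiagram) (τ₀ τ : ℕ × ℕ → ℕ) : Set ((ℕ × ℕ) × (ℕ × ℕ)) :=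
  {p | p.1 ∈ InfDiag lam ∧ p.2 ∈ InfDiag lam ∧ τ₀ p.1 < τ₀ p.2 ∧ τ p.2 < τ p.1}

open Set

section Labelling

variable {α : Type*} {D : Set α} {f g : α → ℕ}

theorem Set.BijOn.encard_inter_preimage_Iic (hf : BijOn f D {n | 1 ≤ n}) (m : ℕ) :
    (D ∩ f ⁻¹' Iic m).encard = m := by
  have himage : f '' (D ∩ f ⁻¹' Iic m) = Icc 1 m := by
    ext n
    constructor
    · rintro ⟨c, ⟨hc, hcm⟩, rfl⟩
      exact ⟨hf.mapsTo hc, hcm⟩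
    · rintro ⟨hn, hnm⟩
      obtain ⟨c, hc, rfl⟩ := hf.surjOn hn
      exact ⟨c, ⟨hc, hnm⟩, rfl⟩
  rw [← (hf.injOn.mono inter_subset_left).encard_image, himage, ← Finset.coe_Icc,
    encard_coe_eq_coe_finsetCard, Nat.card_Icc, Nat.add_sub_cancel]

theorem le_add_encard_inversions (hf : BijOn f D {n | 1 ≤ n}) (hg : BijOn g D {n | 1 ≤ n})
    {c : α} (hc : c ∈ D) :
    (g c : ℕ∞) ≤ f c + {d ∈ D | f c < f d ∧ g d < g c}.encard := by
  have hcover : D ∩ g ⁻¹' Iic (g c - 1) ⊆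
      D ∩ f ⁻¹' Iic (f c - 1) ∪ {d ∈ D | f c < f d ∧ g d < g c} := by
    rintro d ⟨hd, hdc⟩
    have hgd : g d < g c := by
      have : 1 ≤ g c := hg.mapsTo hc
      have : g d ≤ g c - 1 := hdc
      omega
    have hfd : f d ≠ f c := fun h => hgd.ne (congrArg g (hf.injOn hd hc h))
    rcases hfd.lt_or_gt with hlt | hgt
    · exact Or.inl ⟨hd, Nat.le_sub_one_of_lt hlt⟩
    · exact Or.inr ⟨hd, hgt, hgd⟩
  have hcount := (encard_le_encard hcover).trans (encard_union_le _ _)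
  rw [hg.encard_inter_preimage_Iic, hf.encard_inter_preimage_Iic] at hcount
  have hg1 : 1 ≤ g c := hg.mapsTo hc
  have hf1 : 1 ≤ f c := hf.mapsTo hc
  calc (g c : ℕ∞) = ((g c - 1 : ℕ) : ℕ∞) + 1 := by norm_cast; omega
    _ ≤ ((f c - 1 : ℕ) : ℕ∞) + {d ∈ D | f c < f d ∧ g d < g c}.encard + 1 := by gcongr
    _ = f c + {d ∈ D | f c < f d ∧ g d < g c}.encard := by
      rw [add_right_comm]; norm_cast; rw [Nat.sub_add_cancel hf1]

theorem inter_preimage_Iic_subset_of_tail_mono (hf : BijOn f D {n | 1 ≤ n})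
    (hg : BijOn g D {n | 1 ≤ n}) {N k m : ℕ} (hhead : ∀ d ∈ D, f d < N → g d ≤ f d + k)
    (htail : ∀ d ∈ D, ∀ e ∈ D, N ≤ f d → f d ≤ f e → g d ≤ g e) (hm : N + k ≤ m + 1) :
    D ∩ f ⁻¹' Iic m ⊆ D ∩ g ⁻¹' Iic m := by
  rintro d ⟨hd, hdm⟩
  refine ⟨hd, ?_⟩
  by_cases hdN : f d < N
  · simp only [mem_preimage, mem_Iic] at hdm ⊢
    have := hhead d hd hdN
    omega
  by_contra hgd
  simp only [mem_preimage, mem_Iic, not_le] at hgd hdm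
  have hsub : D ∩ g ⁻¹' Iic m ⊆ D ∩ f ⁻¹' Iic (f d - 1) := by
    rintro e ⟨he, hem⟩
    refine ⟨he, Nat.le_sub_one_of_lt (lt_of_not_ge fun hde => ?_)⟩
    have := htail d hd e he (by omega) hde
    simp only [mem_preimage, mem_Iic] at hem
    omega
  have := encard_le_encard hsub
  rw [hg.encard_inter_preimage_Iic, hf.encard_inter_preimage_Iic, Nat.cast_le] at this
  have : 1 ≤ f d := hf.mapsTo hd
  omega

theorem eq_of_tail_mono (hf : BijOn f D {n | 1 ≤ n}) (hg : BijOn g D {n | 1 ≤ n})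
    {N k : ℕ} (hhead : ∀ d ∈ D, f d < N → g d ≤ f d + k)
    (htail : ∀ d ∈ D, ∀ e ∈ D, N ≤ f d → f d ≤ f e → g d ≤ g e)
    {d : α} (hd : d ∈ D) (hNk : N + k ≤ f d) : g d = f d := by
  have hd1 : 1 ≤ f d := hf.mapsTo hd
  have hle : g d ≤ f d :=
    (inter_preimage_Iic_subset_of_tail_mono hf hg hhead htail (by omega)
      ⟨hd, (le_rfl : f d ≤ f d)⟩).2
  have hsub := inter_preimage_Iic_subset_of_tail_mono hf hg hhead htail (m := f d - 1) (by omega)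
  have heq : D ∩ f ⁻¹' Iic (f d - 1) = D ∩ g ⁻¹' Iic (f d - 1) :=
    (finite_of_encard_eq_coe (hf.encard_inter_preimage_Iic _)).eq_of_subset_of_encard_le hsub
      (by rw [hf.encard_inter_preimage_Iic, hg.encard_inter_preimage_Iic])
  have hgt : ¬ g d ≤ f d - 1 := fun h => by
    have hmem : f d ≤ f d - 1 := (heq ▸ ⟨hd, h⟩ : d ∈ D ∩ f ⁻¹' Iic (f d - 1)).2
    omega
  omega

end Labelling

theorem Set.Finite.setOf_eqOn_compl_mapsTo {α β : Type*} {B : Set α} {T : Set β}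
    (hB : B.Finite) (hT : T.Finite) (g : α → β) :
    {f : α → β | EqOn f g Bᶜ ∧ MapsTo f B T}.Finite := by
  have : Finite B := hB.to_subtype
  refine Finite.of_finite_image (f := fun f (b : B) => f b) ((Finite.pi (t := fun _ : B => T)
    fun _ => hT).subset ?_) ?_
  · rintro _ ⟨f, ⟨-, hf⟩, rfl⟩ b -
    exact hf b.2
  · rintro f₁ ⟨h₁, -⟩ f₂ ⟨h₂, -⟩ h
    funext c
    by_cases hc : c ∈ B
    · exact congrFun h ⟨c, hc⟩
    · rw [h₁ hc, h₂ hc]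

namespace InfDiag

variable {lam : YoungDiagram}

theorem zero_mem (lam : YoungDiagram) (j : ℕ) : (0, j) ∈ InfDiag lam :=
  Or.inl rfl

theorem succ_mem_iff {i j : ℕ} : (i + 1, j) ∈ InfDiag lam ↔ (i, j) ∈ lam := by
  simp [InfDiag]

theorem mem_of_succ_mem {i j : ℕ} (h : (i + 1, j) ∈ InfDiag lam) : (i, j) ∈ InfDiag lam := by
  rw [succ_mem_iff] at h
  cases i with
  | zero => exact zero_mem lam j
  | succ i => exact succ_mem_iff.2 (lam.up_left_mem (Nat.le_succ i) le_rfl h)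

end InfDiag

def IsColumnStandard (lam : YoungDiagram) (τ : ℕ × ℕ → ℕ) : Prop :=
  ∀ i j : ℕ, (i, j) ∈ InfDiag lam → (i + 1, j) ∈ InfDiag lam → τ (i + 1, j) = τ (i, j) + 1

namespace IsInfSYT

variable {lam : YoungDiagram} {τ τ₀ : ℕ × ℕ → ℕ}

theorem strictMono_row_zero (hτ : IsInfSYT lam τ) : StrictMono fun j => τ (0, j) :=
  fun _ _ h => hτ.2.2.1 0 _ _ (InfDiag.zero_mem lam _) (InfDiag.zero_mem lam _) h

theorem row_zero_succ (hτ₀ : IsInfSYT lam τ₀) (hcs : IsColumnStandard lam τ₀) {j : ℕ}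
    (hj : lam.rowLen 0 ≤ j) : τ₀ (0, j + 1) = τ₀ (0, j) + 1 := by
  obtain ⟨c, hc, hcj⟩ := hτ₀.2.1.surjOn (show 1 ≤ τ₀ (0, j) + 1 by omega)
  obtain ⟨_ | i, j'⟩ := c
  · have hmono := hτ₀.strictMono_row_zero
    have hlt : j < j' := hmono.lt_iff_lt.1 (by omega)
    have hle : τ₀ (0, j + 1) ≤ τ₀ (0, j') := hmono.monotone hlt
    have hge : τ₀ (0, j) < τ₀ (0, j + 1) := hmono (Nat.lt_succ_self j)
    omega
  · -- the label `τ₀ (0, j) + 1` sits below `(0, j)`, which therefore lies in `λ`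
    have hup := InfDiag.mem_of_succ_mem hc
    have hij : (i, j') = (0, j) :=
      hτ₀.2.1.injOn hup (InfDiag.zero_mem lam j) (by rw [hcs i j' hup hc] at hcj; omega)
    obtain ⟨rfl, rfl⟩ := Prod.mk.inj hij
    rw [InfDiag.succ_mem_iff, YoungDiagram.mem_iff_lt_rowLen] at hc
    omega

theorem row_zero_rowLen_add (hτ₀ : IsInfSYT lam τ₀) (hcs : IsColumnStandard lam τ₀) (t : ℕ) :
    τ₀ (0, lam.rowLen 0 + t) = τ₀ (0, lam.rowLen 0) + t := by
  induction t with
  | zero => rfl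
  | succ t ih => rw [← add_assoc, hτ₀.row_zero_succ hcs (Nat.le_add_right _ _), ih, add_assoc]

theorem eq_row_zero_of_le (hτ₀ : IsInfSYT lam τ₀) (hcs : IsColumnStandard lam τ₀)
    {c : ℕ × ℕ} (hc : c ∈ InfDiag lam) (h : τ₀ (0, lam.rowLen 0) ≤ τ₀ c) :
    c = (0, lam.rowLen 0 + (τ₀ c - τ₀ (0, lam.rowLen 0))) :=
  hτ₀.2.1.injOn hc (InfDiag.zero_mem lam _) (by rw [hτ₀.row_zero_rowLen_add hcs]; omega)

theorem le_of_le_of_row_zero_rowLen_le (hτ₀ : IsInfSYT lam τ₀) (hcs : IsColumnStandard lam τ₀)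
    (hτ : IsInfSYT lam τ) {c d : ℕ × ℕ} (hc : c ∈ InfDiag lam) (hd : d ∈ InfDiag lam)
    (hN : τ₀ (0, lam.rowLen 0) ≤ τ₀ c) (hcd : τ₀ c ≤ τ₀ d) : τ c ≤ τ d := by
  rw [hτ₀.eq_row_zero_of_le hcs hc hN, hτ₀.eq_row_zero_of_le hcs hd (hN.trans hcd)]
  exact hτ.strictMono_row_zero.monotone (by omega)

theorem le_add_of_encard_invSet_le (hτ₀ : IsInfSYT lam τ₀) (hτ : IsInfSYT lam τ) {k : ℕ}
    (hk : (InvSet lam τ₀ τ).encard ≤ k) {c : ℕ × ℕ} (hc : c ∈ InfDiag lam) :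
    τ c ≤ τ₀ c + k := by
  have hinv : {d ∈ InfDiag lam | τ₀ c < τ₀ d ∧ τ d < τ c}.encard ≤ k :=
    (encard_le_encard_of_injOn (f := fun d => (c, d))
      (t := InvSet lam τ₀ τ) (fun _ hd => ⟨hc, hd.1, hd.2.1, hd.2.2⟩)
      (fun _ _ _ _ h => congrArg Prod.snd h)).trans hk
  have := (le_add_encard_inversions hτ₀.2.1 hτ.2.1 hc).trans (add_le_add_right hinv _)
  exact_mod_cast this

end IsInfSYT

/-- Let `τ₀` be the column-standard filling of `λ^(∞)` (vertically adjacent boxes carry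
consecutive labels). For each `k`, only finitely many standard Young tableaux of shape
`λ^(∞)` have at most `k` inversions. -/
theorem finitely_many_bounded_inv (lam : YoungDiagram) (τ₀ : ℕ × ℕ → ℕ)
    (hτ₀ : IsInfSYT lam τ₀)
    (hcs : ∀ i j : ℕ, (i, j) ∈ InfDiag lam → (i + 1, j) ∈ InfDiag lam →
      τ₀ (i + 1, j) = τ₀ (i, j) + 1)
    (k : ℕ) :
    {τ : ℕ × ℕ → ℕ | IsInfSYT lam τ ∧ (InvSet lam τ₀ τ).encard ≤ k}.Finite := by
  set N := τ₀ (0, lam.rowLen 0)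
  set B := InfDiag lam ∩ τ₀ ⁻¹' Iic (N + k)
  have hB : B.Finite := finite_of_encard_eq_coe (hτ₀.2.1.encard_inter_preimage_Iic (N + k))
  refine (hB.setOf_eqOn_compl_mapsTo (finite_Iic (N + k + k)) τ₀).subset ?_
  rintro τ ⟨hτ, hk⟩
  have hhead : ∀ c ∈ InfDiag lam, τ c ≤ τ₀ c + k :=
    fun c hc => hτ₀.le_add_of_encard_invSet_le hτ hk hc
  have htail : ∀ c ∈ InfDiag lam, ∀ d ∈ InfDiag lam, N ≤ τ₀ c → τ₀ c ≤ τ₀ d → τ c ≤ τ d :=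
    fun c hc d hd => hτ₀.le_of_le_of_row_zero_rowLen_le hcs hτ hc hd
  refine ⟨fun c hcB => ?_, fun c hcB => (hhead c hcB.1).trans (by simpa using hcB.2)⟩
  by_cases hc : c ∈ InfDiag lam
  · have hcN : N + k ≤ τ₀ c := (not_le.1 fun h => hcB ⟨hc, h⟩).le
    exact eq_of_tail_mono hτ₀.2.1 hτ.2.1 (fun d hd _ => hhead d hd) htail hc hcN
  · rw [hτ.1 c hc, hτ₀.1 c hc]
end

section
/- Let F be a field with a non-archimedean absolute value and t ∈ F with 0 < |t| < 1. Then the series Σ_{n ≥ 0} t^n · Π_{k=1}^{n} (1 - t^k)/(1 - t^{k+2}) converges in F (when F is complete) and equals 1 + t. Equivalently, the partial products telescope: Π_{k=1}^{n} (1 - t^k)/(1 - t^{k+2}) = (1 - t)(1 - t^2)/((1 - t^{n+1})(1 - t^{n+2})), and the resulting series telescopes to 1 + t. -/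
/-- The regularized dimension series for the partition `(1)`: the partial products
telescope, the series `Σ t^n Π_{k=1}^n (1-t^k)/(1-t^(k+2))` converges in a complete
non-archimedean field with `0 < ‖t‖ < 1`, and its sum equals `1 + t`. -/
theorem regularized_dimension_one {F : Type*} [NormedField F] [CompleteSpace F]
    [IsUltrametricDist F] (t : F) (h0 : 0 < ‖t‖) (h1 : ‖t‖ < 1) :
    (∀ n : ℕ, ∏ k ∈ Finset.Icc 1 n, (1 - t ^ k) / (1 - t ^ (k + 2)) =
      (1 - t) * (1 - t ^ 2) / ((1 - t ^ (n + 1)) * (1 - t ^ (n + 2)))) ∧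
    Summable (fun n : ℕ => t ^ n * ∏ k ∈ Finset.Icc 1 n, (1 - t ^ k) / (1 - t ^ (k + 2))) ∧
    ∑' n : ℕ, t ^ n * ∏ k ∈ Finset.Icc 1 n, (1 - t ^ k) / (1 - t ^ (k + 2)) = 1 + t := by
  -- powers of t have norm < 1, hence 1 - t^m ≠ 0 and ‖1 - t^m‖ = 1 for m ≥ 1
  have hlt : ∀ m : ℕ, m ≠ 0 → ‖t ^ m‖ < 1 := by
    intro m hm
    rw [norm_pow]
    exact pow_lt_one₀ (norm_nonneg t) h1 hm
  have hne : ∀ m : ℕ, m ≠ 0 → 1 - t ^ m ≠ 0 := by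
    intro m hm h
    have hh := hlt m hm
    rw [← sub_eq_zero.mp h, norm_one] at hh
    exact lt_irrefl _ hh
  have hnorm : ∀ m : ℕ, m ≠ 0 → ‖1 - t ^ m‖ = 1 := by
    intro m hm
    have h := IsUltrametricDist.norm_add_eq_max_of_norm_ne_norm
      (x := (1 : F)) (y := -t ^ m) (by
        rw [norm_one, norm_neg]
        exact (hlt m hm).ne')
    rw [← sub_eq_add_neg] at h
    rw [h, norm_one, norm_neg]
    exact max_eq_left (hlt m hm).le
  -- the telescoping product formula
  have hprod : ∀ n : ℕ, ∏ k ∈ Finset.Icc 1 n, (1 - t ^ k) / (1 - t ^ (k + 2)) =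
      (1 - t) * (1 - t ^ 2) / ((1 - t ^ (n + 1)) * (1 - t ^ (n + 2))) := by
    intro n
    induction n with
    | zero =>
        rw [show Finset.Icc 1 0 = ∅ by rfl, Finset.prod_empty, pow_one]
        rw [eq_comm, div_eq_one_iff_eq (mul_ne_zero (by simpa using hne 1 one_ne_zero)
          (hne 2 two_ne_zero))]
    | succ n ih =>
        rw [Finset.prod_Icc_succ_top (by omega : 1 ≤ n + 1), ih]
        have h1 := hne (n + 1) (by omega)
        have h2 := hne (n + 2) (by omega)
        have h3 := hne (n + 3) (by omega)
        have ht := hne 1 one_ne_zero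
        have ht2 := hne 2 two_ne_zero
        rw [pow_one] at ht
        field_simp
  have hsummable : Summable
      (fun n : ℕ => t ^ n * ∏ k ∈ Finset.Icc 1 n, (1 - t ^ k) / (1 - t ^ (k + 2))) := by
    apply Summable.of_norm
    apply Summable.of_nonneg_of_le (fun n => norm_nonneg _) (fun n => ?_)
      (summable_geometric_of_lt_one (norm_nonneg t) h1)
    have e1 : ‖1 - t‖ = 1 := by simpa using hnorm 1 one_ne_zero
    rw [hprod n, norm_mul, norm_pow, norm_div, norm_mul, norm_mul, e1,
      hnorm 2 two_ne_zero, hnorm (n + 1) (by omega), hnorm (n + 2) (by omega)]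
    simp
  refine ⟨hprod, hsummable, ?_⟩
  · -- the sum: telescoping with b n = (1 - t^2) t^n / (1 - t^(n+1))
    set b : ℕ → F := fun n => (1 - t ^ 2) * t ^ n / (1 - t ^ (n + 1)) with hb
    have hterm : ∀ n : ℕ,
        t ^ n * ∏ k ∈ Finset.Icc 1 n, (1 - t ^ k) / (1 - t ^ (k + 2)) = b n - b (n + 1) := by
      intro n
      rw [hprod n, hb]
      have h1 := hne (n + 1) (by omega)
      have h2 := hne (n + 2) (by omega)
      field_simp
      ring
    have hb0 : b 0 = 1 + t := by
      have ht := hne 1 one_ne_zero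
      rw [hb]
      simp only [pow_zero, mul_one, zero_add, pow_one]
      rw [show (1 : F) - t ^ 2 = (1 - t) * (1 + t) by ring]
      rw [pow_one] at ht
      field_simp
    have hbtend : Filter.Tendsto b Filter.atTop (nhds 0) := by
      have : Filter.Tendsto (fun n : ℕ => ‖b n‖) Filter.atTop (nhds 0) := by
        have heq : ∀ n : ℕ, ‖b n‖ = ‖1 - t ^ 2‖ * ‖t‖ ^ n := by
          intro n
          rw [hb]
          simp only [norm_div, norm_mul, norm_pow, hnorm (n + 1) (by omega)]
          simp
        simp only [heq]
        have := tendsto_pow_atTop_nhds_zero_of_lt_one (norm_nonneg t) h1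
        simpa using this.const_mul (‖1 - t ^ 2‖)
      exact tendsto_zero_iff_norm_tendsto_zero.mpr this
    have hpartial : ∀ N : ℕ, ∑ n ∈ Finset.range N,
        (t ^ n * ∏ k ∈ Finset.Icc 1 n, (1 - t ^ k) / (1 - t ^ (k + 2))) = b 0 - b N := by
      intro N
      rw [Finset.sum_congr rfl (fun n _ => hterm n)]
      exact Finset.sum_range_sub' b N
    have htendsto : Filter.Tendsto (fun N : ℕ => ∑ n ∈ Finset.range N,
        (t ^ n * ∏ k ∈ Finset.Icc 1 n, (1 - t ^ k) / (1 - t ^ (k + 2))))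
        Filter.atTop (nhds (1 + t)) := by
      simp only [hpartial, hb0]
      simpa using (tendsto_const_nhds (x := (1 : F) + t)).sub hbtend
    have h2 := hsummable.hasSum.tendsto_sum_nat
    exact tendsto_nhds_unique h2 htendsto
end
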